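/- arXiv:1808.03590 — 10 statements merged into one kernel-verified Lean document; each statement's English description precedes it below -/
import Mathlib

section
/- Let H be a real Hilbert space, f : H → ℝ ∪ {+∞} a proper closed convex function, and S_f ⊆ ℝ × H a closed convex set such that f(x) = sup_{(a,v) ∈ S_f} (a + ⟨v, x⟩) for all x ∈ H. Then for every ε ≥ 0 and every x in the effective domain of f, the ε-subdifferential satisfies ∂_ε f(x) = { v ∈ H : ∃ a ∈ ℝ, (a, v) ∈ S_f and a + ⟨v, x⟩ ≥ f(x) − ε }. -/
/-!
If `v` is an `ε`-subgradient at `x`, the affine map `y ↦ ⟪v, y⟫ - c` with `c = ⟪v, x⟫ + ε - f x`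
minorizes `f`. Suppose no `(a, v) ∈ S` has `a ≥ -c`. Then `(-c, v)` lies outside the closed convex
set of points below `S` (closed because `a ≤ f x - ⟪w, x⟫` on `S`), and a separating hyperplane,
tilted by the finite bound at `x` so that it is not vertical, gives a `y` with
`f y = sup_S (a + ⟪w, y⟫) < ⟪v, y⟫ - c`, a contradiction. The converse inclusion is immediate
from `a + ⟪v, ·⟫ ≤ f`.
-/

open Set Filter Topology RealInnerProductSpace

section LowerClosure

variable {E : Type*}

def lowerClosureFst (S : Set (ℝ × E)) : Set (ℝ × E) :=
  {q | ∃ a, q.1 ≤ a ∧ (a, q.2) ∈ S}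

theorem subset_lowerClosureFst (S : Set (ℝ × E)) : S ⊆ lowerClosureFst S :=
  fun q hq => ⟨q.1, le_rfl, hq⟩

theorem mk_mem_lowerClosureFst {S : Set (ℝ × E)} {q : ℝ × E} (hq : q ∈ lowerClosureFst S)
    {b : ℝ} (hb : b ≤ q.1) : (b, q.2) ∈ lowerClosureFst S :=
  let ⟨a, hqa, haS⟩ := hq
  ⟨a, hb.trans hqa, haS⟩

theorem Convex.lowerClosureFst [AddCommMonoid E] [Module ℝ E] {S : Set (ℝ × E)}
    (hS : Convex ℝ S) : Convex ℝ (lowerClosureFst S) := by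
  rintro q ⟨a, hqa, haS⟩ q' ⟨a', hqa', haS'⟩ μ ν hμ hν hμν
  refine ⟨μ * a + ν * a', ?_, by simpa using hS haS haS' hμ hν hμν⟩
  simp only [Prod.fst_add, Prod.smul_fst, smul_eq_mul]
  gcongr

theorem IsClosed.lowerClosureFst [TopologicalSpace E] [FirstCountableTopology E]
    {S : Set (ℝ × E)} (hS : IsClosed S) {φ : E → ℝ} (hφ : Continuous φ)
    (hSφ : ∀ q ∈ S, q.1 ≤ φ q.2) : IsClosed (lowerClosureFst S) := by
  refine IsSeqClosed.isClosed fun q q₀ hq hlim => ?_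
  choose a hqa haS using hq
  have hfst : Tendsto (fun n => (q n).1) atTop (𝓝 q₀.1) := (continuous_fst.tendsto _).comp hlim
  have hsnd : Tendsto (fun n => (q n).2) atTop (𝓝 q₀.2) := (continuous_snd.tendsto _).comp hlim
  obtain ⟨m, hm⟩ := hfst.bddBelow_range
  obtain ⟨M, hM⟩ := ((hφ.tendsto _).comp hsnd).bddAbove_range
  have ha_mem : ∀ n, a n ∈ Icc m M := fun n =>
    ⟨(hm ⟨n, rfl⟩).trans (hqa n), (hSφ _ (haS n)).trans (hM ⟨n, rfl⟩)⟩
  obtain ⟨a₀, -, ψ, hψ, ha⟩ := isCompact_Icc.tendsto_subseq ha_mem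
  refine ⟨a₀, le_of_tendsto_of_tendsto' (hfst.comp hψ.tendsto_atTop) ha fun n => hqa (ψ n), ?_⟩
  exact hS.mem_of_tendsto (ha.prodMk_nhds (hsnd.comp hψ.tendsto_atTop))
    (Eventually.of_forall fun n => haS (ψ n))

end LowerClosure

theorem nonneg_of_forall_le_mul_add_lt {a s c u : ℝ} (h : ∀ b ≤ a, b * s + c < u) : 0 ≤ s := by
  by_contra! hs
  have hb := h (min a ((u - c) / s)) (min_le_left _ _)
  have hmul : (u - c) / s * s ≤ min a ((u - c) / s) * s :=
    mul_le_mul_of_nonpos_right (min_le_right _ _) hs.le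
  rw [div_mul_cancel₀ _ hs.ne] at hmul
  linarith

section Hilbert

variable {H : Type*} [NormedAddCommGroup H] [InnerProductSpace ℝ H]

theorem exists_eq_mul_add_inner [CompleteSpace H] (g : StrongDual ℝ (ℝ × H)) :
    ∃ (s : ℝ) (z : H), ∀ q : ℝ × H, g q = q.1 * s + ⟪z, q.2⟫ := by
  refine ⟨g (1, 0), (InnerProductSpace.toDual ℝ H).symm (g.comp (.inr ℝ ℝ H)), fun q => ?_⟩
  have hq : q = q.1 • ((1 : ℝ), (0 : H)) + (0, q.2) := by ext <;> simp
  rw [InnerProductSpace.toDual_symm_apply, hq, map_add, map_smul]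
  simp

theorem inner_smul_add_smul_eq_div (q : ℝ × H) (z x : H) {s t : ℝ} (hst : s + t ≠ 0) :
    q.1 + ⟪q.2, (s + t)⁻¹ • (z + t • x)⟫
      = (q.1 * s + ⟪z, q.2⟫ + t * (q.1 + ⟪q.2, x⟫)) / (s + t) := by
  rw [real_inner_smul_right, inner_add_right, real_inner_smul_right, real_inner_comm z]
  field_simp
  ring

theorem exists_affine_lt_of_notMem [CompleteSpace H] {T : Set (ℝ × H)} (hconv : Convex ℝ T)
    (hclosed : IsClosed T) (hdown : ∀ q ∈ T, ∀ b ≤ q.1, (b, q.2) ∈ T) {x : H} {M : ℝ}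
    (hM : ∀ q ∈ T, q.1 + ⟪q.2, x⟫ ≤ M) {p : ℝ × H} (hp : p ∉ T) :
    ∃ (y : H) (r : ℝ), (∀ q ∈ T, q.1 + ⟪q.2, y⟫ < r) ∧ r < p.1 + ⟪p.2, y⟫ := by
  rcases T.eq_empty_or_nonempty with rfl | ⟨q₀, hq₀⟩
  · exact ⟨0, p.1 - 1, by simp, by simp⟩
  obtain ⟨g, u, hgT, hgp⟩ := geometric_hahn_banach_closed_point hconv hclosed hp
  obtain ⟨s, z, hg⟩ := exists_eq_mul_add_inner g
  have hs : 0 ≤ s := nonneg_of_forall_le_mul_add_lt fun b hb => by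
    simpa [hg] using hgT _ (hdown q₀ hq₀ b hb)
  -- tilting the separating hyperplane towards the bound at `x` makes it non-vertical
  obtain ⟨t, ht, htp⟩ := exists_pos_mul_lt (sub_pos.2 hgp) (M - (p.1 + ⟪p.2, x⟫))
  have hst : 0 < s + t := by linarith
  refine ⟨(s + t)⁻¹ • (z + t • x), (u + t * M) / (s + t), fun q hq => ?_, ?_⟩
  · rw [inner_smul_add_smul_eq_div q z x hst.ne']
    refine div_lt_div_of_pos_right ?_ hst
    exact add_lt_add_of_lt_of_le (hg q ▸ hgT q hq) (mul_le_mul_of_nonneg_left (hM q hq) ht.le)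
  · rw [inner_smul_add_smul_eq_div p z x hst.ne']
    refine div_lt_div_of_pos_right ?_ hst
    rw [hg] at htp
    linarith

theorem exists_affine_lt_of_forall_lt [CompleteSpace H] {S : Set (ℝ × H)} (hconv : Convex ℝ S)
    (hclosed : IsClosed S) {x : H} {M : ℝ} (hM : ∀ q ∈ S, q.1 + ⟪q.2, x⟫ ≤ M) {b : ℝ} {v : H}
    (hv : ∀ a, (a, v) ∈ S → a < b) :
    ∃ (y : H) (r : ℝ), (∀ q ∈ S, q.1 + ⟪q.2, y⟫ < r) ∧ r < b + ⟪v, y⟫ := by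
  have hT_closed : IsClosed (lowerClosureFst S) :=
    hclosed.lowerClosureFst (φ := fun w => M - ⟪w, x⟫) (by fun_prop)
      fun q hq => by linarith [hM q hq]
  have hT_bdd : ∀ q ∈ lowerClosureFst S, q.1 + ⟪q.2, x⟫ ≤ M := fun q ⟨a, hqa, haS⟩ => by
    linarith [hM _ haS]
  have hbv : (b, v) ∉ lowerClosureFst S := fun ⟨a, hba, haS⟩ => (hv a haS).not_ge hba
  obtain ⟨y, r, hT, hr⟩ := exists_affine_lt_of_notMem hconv.lowerClosureFst hT_closed
    (fun q hq _ hb => mk_mem_lowerClosureFst hq hb) hT_bdd hbv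
  exact ⟨y, r, fun q hq => hT q (subset_lowerClosureFst S hq), hr⟩

end Hilbert

theorem eps_subdiff_eq_affine_support_general
    {H : Type*} [NormedAddCommGroup H] [InnerProductSpace ℝ H] [CompleteSpace H]
    (f : H → EReal) (S : Set (ℝ × H))
    (hproper_bot : ∀ x, f x ≠ ⊥)
    (hSclosed : IsClosed S) (hSconv : Convex ℝ S)
    (hrep : ∀ x, f x = ⨆ p ∈ S, ((p.1 + inner ℝ p.2 x : ℝ) : EReal))
    (ε : ℝ) (x : H) (hx : f x ≠ ⊤) :
    {v : H | ∀ y, f x + ((inner ℝ v (y - x) : ℝ) : EReal) ≤ f y + (ε : EReal)}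
      = {v : H | ∃ a : ℝ, (a, v) ∈ S ∧ f x ≤ ((a + inner ℝ v x + ε : ℝ) : EReal)} := by
  have hle : ∀ {y p}, p ∈ S → ((p.1 + ⟪p.2, y⟫ : ℝ) : EReal) ≤ f y := fun {y _} hp =>
    hrep y ▸ le_biSup (fun p : ℝ × H => ((p.1 + ⟪p.2, y⟫ : ℝ) : EReal)) hp
  obtain ⟨fx, hfx⟩ : ∃ r : ℝ, f x = r := ⟨_, (EReal.coe_toReal hx (hproper_bot x)).symm⟩
  ext v
  simp only [mem_ofPred_eq, hfx, EReal.coe_le_coe_iff]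
  constructor
  · intro hv
    by_contra! hvS
    obtain ⟨y, r, hSy, hr⟩ := exists_affine_lt_of_forall_lt hSconv hSclosed
      (fun q hq => EReal.coe_le_coe_iff.1 (hfx ▸ hle hq)) (b := fx - ⟪v, x⟫ - ε)
      fun a haS => by linarith [hvS a haS]
    have hfy : f y ≤ r := hrep y ▸ iSup₂_le fun p hp => EReal.coe_le_coe_iff.2 (hSy p hp).le
    have hvy := (hv y).trans (add_le_add_left hfy _)
    norm_cast at hvy
    rw [inner_sub_right] at hvy
    linarith
  · rintro ⟨a, haS, hax⟩ y
    calc ((fx + ⟪v, y - x⟫ : ℝ) : EReal) ≤ ((a + ⟪v, y⟫ + ε : ℝ) : EReal) := by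
          rw [EReal.coe_le_coe_iff, inner_sub_right]
          linarith
      _ ≤ f y + ε := by
          rw [EReal.coe_add]
          exact add_le_add_left (hle haS) _

/-- characterization of the ε-subdifferential via an affine support set. -/
theorem eps_subdiff_eq_affine_support
    {H : Type*} [NormedAddCommGroup H] [InnerProductSpace ℝ H] [CompleteSpace H]
    (f : H → EReal) (S : Set (ℝ × H))
    (hproper_top : ∃ x, f x ≠ ⊤) (hproper_bot : ∀ x, f x ≠ ⊥)
    (hlsc : LowerSemicontinuous f)
    (hconv : Convex ℝ {p : H × ℝ | f p.1 ≤ (p.2 : EReal)})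
    (hSclosed : IsClosed S) (hSconv : Convex ℝ S)
    (hrep : ∀ x, f x = ⨆ p ∈ S, ((p.1 + inner ℝ p.2 x : ℝ) : EReal))
    (ε : ℝ) (hε : 0 ≤ ε) (x : H) (hx : f x ≠ ⊤) :
    {v : H | ∀ y, f x + ((inner ℝ v (y - x) : ℝ) : EReal) ≤ f y + (ε : EReal)}
      = {v : H | ∃ a : ℝ, (a, v) ∈ S ∧ f x ≤ ((a + inner ℝ v x + ε : ℝ) : EReal)} :=
  eps_subdiff_eq_affine_support_general f S hproper_bot hSclosed hSconv hrep ε x hx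
end

section
/- Let H be a real Hilbert space, f : H → ℝ ∪ {+∞} a proper closed convex function, and S_f an affine support set of f (a closed convex set with f(x) = sup_{(a,v) ∈ S_f} (a + ⟨v, x⟩) for all x). Then f is bounded below on H if and only if S_f ∩ (ℝ × {0}) ≠ ∅. -/
/-- f is bounded below iff its affine support set meets ℝ × {0}. -/
theorem boundedBelow_iff_affine_support_meets_axis
    {H : Type*} [NormedAddCommGroup H] [InnerProductSpace ℝ H] [CompleteSpace H]
    (f : H → EReal) (S : Set (ℝ × H))
    (hproper_top : ∃ x, f x ≠ ⊤) (hproper_bot : ∀ x, f x ≠ ⊥)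
    (hlsc : LowerSemicontinuous f)
    (hconv : Convex ℝ {p : H × ℝ | f p.1 ≤ (p.2 : EReal)})
    (hSclosed : IsClosed S) (hSconv : Convex ℝ S)
    (hrep : ∀ x, f x = ⨆ p ∈ S, ((p.1 + inner ℝ p.2 x : ℝ) : EReal)) :
    (∃ c : ℝ, ∀ x, (c : EReal) ≤ f x) ↔ ∃ a : ℝ, (a, (0 : H)) ∈ S := by
  constructor
  · rintro ⟨c, hc⟩
    obtain ⟨x₀, hx₀⟩ := hproper_top
    obtain ⟨M, hM⟩ : ∃ M : ℝ, f x₀ = (M : EReal) :=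
      ⟨(f x₀).toReal, (EReal.coe_toReal hx₀ (hproper_bot x₀)).symm⟩
    -- pointwise lower bound: every affine minorant is below f
    have hle : ∀ p ∈ S, ∀ x : H, ((p.1 + inner ℝ p.2 x : ℝ) : EReal) ≤ f x := by
      intro p hp x
      rw [hrep x]
      exact le_iSup₂ (f := fun p (_ : p ∈ S) => ((p.1 + inner ℝ p.2 x : ℝ) : EReal)) p hp
    have hub : ∀ p ∈ S, (p.1 + inner ℝ p.2 x₀ : ℝ) ≤ M := by
      intro p hp
      have h1 := hle p hp x₀
      rw [hM] at h1
      exact_mod_cast h1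
    have hcM : c ≤ M := by
      have := hc x₀
      rw [hM] at this
      exact_mod_cast this
    -- S is nonempty
    have hSne : S.Nonempty := by
      by_contra h
      rw [Set.not_nonempty_iff_eq_empty] at h
      have h2 := hrep x₀
      rw [h] at h2
      simp at h2
      exact hproper_bot x₀ h2
    obtain ⟨p₀, hp₀⟩ := hSne
    -- the downward extension of S
    set D : Set (ℝ × H) := {p | ∃ b : ℝ, p.1 ≤ b ∧ (b, p.2) ∈ S} with hDdef
    have hSD : ∀ p ∈ S, p ∈ D := fun p hp => ⟨p.1, le_refl _, by simpa using hp⟩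
    have hDconv : Convex ℝ D := by
      rintro p ⟨bp, hbp1, hbp2⟩ q ⟨bq, hbq1, hbq2⟩ a b ha hb hab
      refine ⟨a * bp + b * bq, ?_, ?_⟩
      · have h1 : a * p.1 ≤ a * bp := mul_le_mul_of_nonneg_left hbp1 ha
        have h2 : b * q.1 ≤ b * bq := mul_le_mul_of_nonneg_left hbq1 hb
        simpa [Prod.smul_def, smul_eq_mul] using add_le_add h1 h2
      · have := hSconv hbp2 hbq2 ha hb hab
        simpa [Prod.smul_def, smul_eq_mul] using this
    -- key step: some (a, 0) lies in the closure of D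
    have key : ∃ a : ℝ, ((a, (0 : H)) : ℝ × H) ∈ closure D := by
      by_contra hno
      push_neg at hno
      obtain ⟨φ, u, hφ, hu⟩ :=
        geometric_hahn_banach_closed_point hDconv.closure isClosed_closure (hno (c - 1))
      have hφD : ∀ p ∈ D, φ p < u := fun p hp => hφ p (subset_closure hp)
      set α : ℝ := φ ((1 : ℝ), (0 : H)) with hα
      set ψ : H →L[ℝ] ℝ := φ.comp (ContinuousLinearMap.inr ℝ ℝ H) with hψ
      have hsplit : ∀ p : ℝ × H, φ p = p.1 * α + ψ p.2 := by
        intro p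
        have hp : p.1 • ((1 : ℝ), (0 : H)) + ((0 : ℝ), p.2) = p := by
          simp [Prod.ext_iff]
        rw [← hp, map_add, map_smul]
        simp [hα, hψ, smul_eq_mul]
      have hux : u < (c - 1) * α := by
        have h := hu
        rw [hsplit ((c - 1), (0 : H))] at h
        simpa using h
      -- α ≥ 0
      have hαnn : 0 ≤ α := by
        by_contra hneg
        push_neg at hneg
        set t : ℝ := |(φ p₀ - u) / α| + 1 with ht
        have ht0 : 0 ≤ t := by positivity
        have htD : ((p₀.1 - t, p₀.2) : ℝ × H) ∈ D :=
          ⟨p₀.1, by show p₀.1 - t ≤ p₀.1; linarith, by simpa using hp₀⟩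
        have hlt := hφD _ htD
        have hval : φ ((p₀.1 - t, p₀.2) : ℝ × H) = φ p₀ - t * α := by
          rw [hsplit ((p₀.1 - t, p₀.2) : ℝ × H), hsplit p₀]
          ring
        rw [hval] at hlt
        -- t ≥ (φ p₀ - u)/α, α < 0 ⇒ t * α ≤ φ p₀ - u
        have h1 : (φ p₀ - u) / α ≤ t := by
          have := le_abs_self ((φ p₀ - u) / α)
          linarith
        have h2 : t * α ≤ φ p₀ - u := by
          have h3 := mul_le_mul_of_nonpos_right h1 (le_of_lt hneg)
          rwa [div_mul_cancel₀ _ (ne_of_lt hneg)] at h3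
        linarith
      rcases eq_or_lt_of_le hαnn with hα0 | hαpos
      · -- α = 0 : uniform negative direction
        have hu0 : u < 0 := by
          rw [← hα0] at hux; linarith
        have hψu : ∀ p ∈ S, ψ p.2 < u := by
          intro p hp
          have := hφD p (hSD p hp)
          rw [hsplit p, ← hα0] at this
          linarith
        set w : H := (InnerProductSpace.toDual ℝ H).symm ψ with hw
        have hinner : ∀ v : H, (inner ℝ w v : ℝ) = ψ v := fun v =>
          InnerProductSpace.toDual_symm_apply
        set t : ℝ := (M - (c - 1)) / (-u) with htdef
        have htpos : 0 < t := by
          apply div_pos (by linarith) (by linarith)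
        have hbound : ∀ p ∈ S, (p.1 + inner ℝ p.2 (x₀ + t • w) : ℝ) ≤ c - 1 := by
          intro p hp
          have h1 : (inner ℝ p.2 (x₀ + t • w) : ℝ) = inner ℝ p.2 x₀ + t * ψ p.2 := by
            rw [inner_add_right, real_inner_smul_right, real_inner_comm w p.2, hinner]
          have h2 := hub p hp
          have h3 := hψu p hp
          have h4 : t * ψ p.2 ≤ t * u := mul_le_mul_of_nonneg_left (le_of_lt h3) (le_of_lt htpos)
          have hune : u ≠ 0 := ne_of_lt hu0
          have h5 : t * u = -(M - (c - 1)) := by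
            rw [htdef]
            field_simp
          rw [h1]
          linarith
        have hf : f (x₀ + t • w) ≤ ((c - 1 : ℝ) : EReal) := by
          rw [hrep]
          exact iSup₂_le fun p hp => EReal.coe_le_coe_iff.mpr (hbound p hp)
        have hcc : c ≤ c - 1 := EReal.coe_le_coe_iff.mp (le_trans (hc (x₀ + t • w)) hf)
        linarith
      · -- α > 0 : f dips below c at w / α
        set w : H := α⁻¹ • (InnerProductSpace.toDual ℝ H).symm ψ with hw
        have hinner : ∀ v : H, (inner ℝ v w : ℝ) = α⁻¹ * ψ v := by
          intro v
          rw [hw, real_inner_smul_right, real_inner_comm _ v, InnerProductSpace.toDual_symm_apply]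
        have hbound : ∀ p ∈ S, (p.1 + inner ℝ p.2 w : ℝ) ≤ c - 1 := by
          intro p hp
          have h1 := hφD p (hSD p hp)
          rw [hsplit p] at h1
          have h2 : p.1 * α + ψ p.2 < (c - 1) * α := lt_trans h1 hux
          rw [hinner p.2]
          have h3 : α⁻¹ * (p.1 * α + ψ p.2) ≤ α⁻¹ * ((c - 1) * α) :=
            mul_le_mul_of_nonneg_left (le_of_lt h2) (by positivity)
          have hne : α ≠ 0 := ne_of_gt hαpos
          calc p.1 + α⁻¹ * ψ p.2 = α⁻¹ * (p.1 * α + ψ p.2) := by field_simp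
            _ ≤ α⁻¹ * ((c - 1) * α) := h3
            _ = c - 1 := by field_simp
        have hf : f w ≤ ((c - 1 : ℝ) : EReal) := by
          rw [hrep]
          exact iSup₂_le fun p hp => EReal.coe_le_coe_iff.mpr (hbound p hp)
        have hcc : c ≤ c - 1 := EReal.coe_le_coe_iff.mp (le_trans (hc w) hf)
        linarith
    -- extract a point of S on the axis from the closure of D
    obtain ⟨a, haD⟩ := key
    rw [mem_closure_iff_seq_limit] at haD
    obtain ⟨q, hqD, hqlim⟩ := haD
    choose b hb1 hb2 using hqD
    -- the second coordinates tend to 0 and the first to a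
    have hq1 : Filter.Tendsto (fun n => (q n).1) Filter.atTop (nhds a) :=
      (continuous_fst.tendsto _).comp hqlim
    have hq2 : Filter.Tendsto (fun n => (q n).2) Filter.atTop (nhds (0 : H)) :=
      (continuous_snd.tendsto _).comp hqlim
    have hqi : Filter.Tendsto (fun n => (inner ℝ ((q n).2) x₀ : ℝ)) Filter.atTop (nhds 0) := by
      have h := Filter.Tendsto.inner (𝕜 := ℝ) hq2 (tendsto_const_nhds (x := x₀))
      simpa using h
    -- eventually, b n is trapped in a compact interval
    have hev : ∀ᶠ n in Filter.atTop, b n ∈ Set.Icc (a - 1) (M + 1) := by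
      have h1 : ∀ᶠ n in Filter.atTop, (q n).1 > a - 1 :=
        hq1.eventually (eventually_gt_nhds (by linarith))
      have h2 : ∀ᶠ n in Filter.atTop, (inner ℝ ((q n).2) x₀ : ℝ) > -1 :=
        hqi.eventually (eventually_gt_nhds (by linarith))
      filter_upwards [h1, h2] with n hn1 hn2
      constructor
      · linarith [hb1 n]
      · have := hub _ (hb2 n)
        simp only at this
        linarith
    obtain ⟨N, hN⟩ := Filter.eventually_atTop.mp hev
    obtain ⟨blim, hblimmem, σ, hσ, hσlim⟩ :=
      (isCompact_Icc (a := a - 1) (b := M + 1)).tendsto_subseq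
        (x := fun k => b (k + N)) (fun k => hN (k + N) (Nat.le_add_left _ _))
    refine ⟨blim, ?_⟩
    have hsub : Filter.Tendsto (fun k => σ k + N) Filter.atTop Filter.atTop :=
      Filter.tendsto_atTop_mono (fun k => Nat.le_add_right (σ k) N) hσ.tendsto_atTop
    have hv : Filter.Tendsto (fun k => (q (σ k + N)).2) Filter.atTop (nhds (0 : H)) :=
      hq2.comp hsub
    have hblim : Filter.Tendsto (fun k => b (σ k + N)) Filter.atTop (nhds blim) := hσlim
    have hpt : Filter.Tendsto (fun k => ((b (σ k + N), (q (σ k + N)).2) : ℝ × H))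
        Filter.atTop (nhds ((blim, (0 : H)) : ℝ × H)) :=
      hblim.prodMk_nhds hv
    exact hSclosed.mem_of_tendsto hpt (Filter.Eventually.of_forall fun k => hb2 _)
  · rintro ⟨a, ha⟩
    refine ⟨a, fun x => ?_⟩
    rw [hrep x]
    have := le_iSup₂ (f := fun p (_ : p ∈ S) => ((p.1 + inner ℝ p.2 x : ℝ) : EReal)) (a, (0 : H)) ha
    simpa using this
end

section
/- Let H be a real Hilbert space, f : H → ℝ ∪ {+∞} a proper closed convex function which is bounded below, and S_f an affine support set of f. Then sup { a : (a, 0) ∈ S_f } = inf_{x ∈ H} f(x). -/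
/-!
Every `(a, 0) ∈ S` is a constant affine minorant of `f`, which gives `sup ≤ inf`. Conversely,
suppose a real `t` lies strictly between the two sides. A finite value `f x₀ ≤ M` bounds the
first coordinates of the points of `S` whose second coordinate is small, so a limit argument
shows that `(t, 0)` is not in the closure of `S + (-∞, 0] × {0}`. Hahn–Banach and the Riesz
representation separate it by `(a, v) ↦ β a + ⟪y, v⟫` with `β ≥ 0`. Adding a small multiple
`s` of the affine bound at `x₀` makes the hyperplane non-vertical, and then
`x = (β + s)⁻¹ (y + s x₀)` has `f x ≤ t`, contradicting `t < inf f`.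
-/

open Set Filter Topology
open scoped Pointwise InnerProductSpace

section Normed

variable {E : Type*} [NormedAddCommGroup E] [NormedSpace ℝ E]

lemma exists_le_of_mem_closure_add_Iic_prod_zero {S : Set (ℝ × E)} (hS : IsClosed S)
    (ℓ : E →L[ℝ] ℝ) {M : ℝ} (hM : ∀ p ∈ S, p.1 + ℓ p.2 ≤ M) {t : ℝ}
    (ht : (t, (0 : E)) ∈ closure (S + Iic 0 ×ˢ {0})) : ∃ a, t ≤ a ∧ (a, (0 : E)) ∈ S := by
  obtain ⟨w, hwT, hw⟩ := mem_closure_iff_seq_limit.mp ht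
  choose p hpS q hq hpq using fun n => Set.mem_add.mp (hwT n)
  have hw₁ : ∀ n, (w n).1 ≤ (p n).1 := fun n => by
    simpa [← hpq n] using (hq n).1
  have hw₂ : ∀ n, (p n).2 = (w n).2 := fun n => by
    simp [← hpq n, mem_singleton_iff.mp (hq n).2]
  have hp₂ : Tendsto (fun n => (p n).2) atTop (𝓝 0) := by
    simpa only [hw₂] using hw.snd_nhds
  have hw₁' : Tendsto (fun n => (w n).1) atTop (𝓝 t) := hw.fst_nhds
  have hbound : ∀ᶠ n in atTop, (p n).1 ∈ Icc (t - 1) (M + 1) := by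
    have hℓ : Tendsto (fun n => ℓ (p n).2) atTop (𝓝 0) :=
      (ℓ.continuous.tendsto' 0 0 (map_zero ℓ)).comp hp₂
    filter_upwards [hw₁'.eventually (lt_mem_nhds (sub_one_lt t)),
      hℓ.eventually (lt_mem_nhds (neg_one_lt_zero : (-1 : ℝ) < 0))] with n h₁ h₂
    have := hM _ (hpS n)
    exact ⟨(h₁.trans_le (hw₁ n)).le, by linarith⟩
  obtain ⟨a, -, φ, hφ, ha⟩ := isCompact_Icc.tendsto_subseq' hbound.frequently
  have hpφ : Tendsto (p ∘ φ) atTop (𝓝 (a, 0)) :=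
    ha.prodMk_nhds (hp₂.comp hφ.tendsto_atTop)
  refine ⟨a, le_of_tendsto_of_tendsto' (hw₁'.comp hφ.tendsto_atTop) ha fun n => hw₁ (φ n),
    hS.mem_of_tendsto hpφ (Eventually.of_forall fun n => hpS (φ n))⟩

end Normed

lemma exists_pos_add_mul_lt {u β t : ℝ} (h : u < β * t) (M : ℝ) :
    ∃ s > 0, u + s * M < (β + s) * t := by
  have hden : 0 < |M - t| + 1 := by positivity
  refine ⟨(β * t - u) / (|M - t| + 1), div_pos (by linarith) hden, ?_⟩
  set s := (β * t - u) / (|M - t| + 1)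
  have hs : s * (|M - t| + 1) = β * t - u := div_mul_cancel₀ _ hden.ne'
  have hs₀ : 0 ≤ s := (div_pos (by linarith) hden).le
  nlinarith [le_abs_self (M - t)]

lemma nonneg_of_forall_mul_sub_lt {β a u : ℝ} (h : ∀ r ≥ 0, β * (a - r) < u) : 0 ≤ β := by
  by_contra! hβ
  have hr := h ((|u| + |β * a|) / -β) (div_nonneg (by positivity) (by linarith))
  have : β * ((|u| + |β * a|) / -β) = -(|u| + |β * a|) := by
    rw [div_neg, mul_neg, mul_div_cancel₀ _ hβ.ne]
  nlinarith [le_abs_self u, neg_abs_le (β * a)]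

section Hilbert

variable {H : Type*} [NormedAddCommGroup H] [InnerProductSpace ℝ H]

noncomputable def affineEnvelope (S : Set (ℝ × H)) (x : H) : EReal :=
  ⨆ p ∈ S, ((p.1 + ⟪p.2, x⟫_ℝ : ℝ) : EReal)

lemma le_affineEnvelope {S : Set (ℝ × H)} {p : ℝ × H} (hp : p ∈ S) (x : H) :
    ((p.1 + ⟪p.2, x⟫_ℝ : ℝ) : EReal) ≤ affineEnvelope S x :=
  le_iSup₂_of_le p hp le_rfl

lemma affineEnvelope_le {S : Set (ℝ × H)} {x : H} {r : ℝ} (h : ∀ p ∈ S, p.1 + ⟪p.2, x⟫_ℝ ≤ r) :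
    affineEnvelope S x ≤ r :=
  iSup₂_le fun p hp => EReal.coe_le_coe (h p hp)

lemma iSup_axis_le_iInf_affineEnvelope (S : Set (ℝ × H)) :
    ⨆ a ∈ {a : ℝ | (a, (0 : H)) ∈ S}, (a : EReal) ≤ ⨅ x, affineEnvelope S x :=
  iSup₂_le fun a ha => le_iInf fun x => by
    simpa using le_affineEnvelope (p := (a, 0)) (show (a, (0 : H)) ∈ S from ha) x

variable [CompleteSpace H]

lemma ContinuousLinearMap.exists_apply_eq_mul_fst_add_inner (φ : ℝ × H →L[ℝ] ℝ) :
    ∃ (β : ℝ) (y : H), ∀ q : ℝ × H, φ q = β * q.1 + ⟪y, q.2⟫_ℝ := by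
  refine ⟨φ (1, 0), (InnerProductSpace.toDual ℝ H).symm (φ.comp (.inr ℝ ℝ H)), fun q => ?_⟩
  rw [InnerProductSpace.toDual_symm_apply, ← φ.comp_inl_add_comp_inr q]
  have : ((q.1, 0) : ℝ × H) = q.1 • (1, 0) := by simp
  simp only [ContinuousLinearMap.coe_comp, Function.comp_apply, ContinuousLinearMap.inl_apply,
    ContinuousLinearMap.inr_apply]
  rw [this, map_smul, smul_eq_mul, mul_comm]

lemma exists_forall_fst_add_inner_le_of_forall_axis_lt {S : Set (ℝ × H)} (hS : IsClosed S)
    (hSc : Convex ℝ S) {x₀ : H} {M : ℝ} (hM : ∀ p ∈ S, p.1 + ⟪p.2, x₀⟫_ℝ ≤ M) {t : ℝ}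
    (ht : ∀ a, (a, (0 : H)) ∈ S → a < t) : ∃ x, ∀ p ∈ S, p.1 + ⟪p.2, x⟫_ℝ ≤ t := by
  rcases S.eq_empty_or_nonempty with rfl | ⟨p₀, hp₀⟩
  · exact ⟨0, by simp⟩
  set T := S + Iic (0 : ℝ) ×ˢ ({0} : Set H)
  have hST : ∀ p ∈ S, ∀ r ≥ 0, (p.1 - r, p.2) ∈ closure T := fun p hp r hr =>
    subset_closure ⟨p, hp, (-r, 0), ⟨by simpa using hr, rfl⟩, by ext <;> simp [sub_eq_add_neg]⟩
  have htT : (t, (0 : H)) ∉ closure T := fun h => by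
    obtain ⟨a, hta, ha⟩ := exists_le_of_mem_closure_add_Iic_prod_zero hS (innerSL ℝ x₀)
      (fun p hp => by simpa [real_inner_comm] using hM p hp) h
    exact (ht a ha).not_ge hta
  obtain ⟨φ, u, hφT, huφ⟩ := geometric_hahn_banach_closed_point
    (hSc.add ((convex_Iic 0).prod (convex_singleton 0))).closure isClosed_closure htT
  obtain ⟨β, y, hφ⟩ := φ.exists_apply_eq_mul_fst_add_inner
  simp only [hφ, inner_zero_right, add_zero] at hφT huφ
  have hsep : ∀ p ∈ S, ∀ r ≥ 0, β * (p.1 - r) + ⟪y, p.2⟫_ℝ < u := fun p hp r hr =>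
    hφT _ (hST p hp r hr)
  have hβ : 0 ≤ β := nonneg_of_forall_mul_sub_lt (a := p₀.1) (u := u - ⟪y, p₀.2⟫_ℝ)
    fun r hr => by linarith [hsep p₀ hp₀ r hr]
  obtain ⟨s, hs, hsM⟩ := exists_pos_add_mul_lt huφ M
  have hβs : 0 < β + s := by linarith
  refine ⟨(β + s)⁻¹ • (y + s • x₀), fun p hp => ?_⟩
  have key : (β + s) * (p.1 + ⟪p.2, (β + s)⁻¹ • (y + s • x₀)⟫_ℝ)
      = β * p.1 + ⟪y, p.2⟫_ℝ + s * (p.1 + ⟪p.2, x₀⟫_ℝ) := by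
    rw [inner_smul_right, inner_add_right, inner_smul_right, real_inner_comm y]
    field_simp
    ring
  refine le_of_mul_le_mul_left ?_ hβs
  linarith [hsep p hp 0 le_rfl, mul_le_mul_of_nonneg_left (hM p hp) hs.le]

theorem iInf_affineEnvelope_le_iSup_axis {S : Set (ℝ × H)} (hS : IsClosed S) (hSc : Convex ℝ S)
    (hfin : ∃ x, affineEnvelope S x ≠ ⊤) :
    ⨅ x, affineEnvelope S x ≤ ⨆ a ∈ {a : ℝ | (a, (0 : H)) ∈ S}, (a : EReal) := by
  by_contra! h
  obtain ⟨t, hsup, hinf⟩ := EReal.lt_iff_exists_real_btwn.mp h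
  obtain ⟨x₀, hx₀⟩ := hfin
  have hM : ∀ p ∈ S, p.1 + ⟪p.2, x₀⟫_ℝ ≤ (affineEnvelope S x₀).toReal := fun p hp =>
    EReal.coe_le_coe_iff.mp ((le_affineEnvelope hp x₀).trans (EReal.le_coe_toReal hx₀))
  have ht : ∀ a, (a, (0 : H)) ∈ S → a < t := fun a ha =>
    EReal.coe_lt_coe_iff.mp (lt_of_le_of_lt (le_iSup₂_of_le a ha le_rfl) hsup)
  obtain ⟨x, hx⟩ := exists_forall_fst_add_inner_le_of_forall_axis_lt hS hSc hM ht
  exact (hinf.trans_le (iInf_le _ x)).not_ge (affineEnvelope_le hx)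

end Hilbert

theorem sup_axis_eq_inf_general
    {H : Type*} [NormedAddCommGroup H] [InnerProductSpace ℝ H] [CompleteSpace H]
    (f : H → EReal) (S : Set (ℝ × H))
    (hproper_top : ∃ x, f x ≠ ⊤)
    (hSclosed : IsClosed S) (hSconv : Convex ℝ S)
    (hrep : ∀ x, f x = ⨆ p ∈ S, ((p.1 + inner ℝ p.2 x : ℝ) : EReal)) :
    (⨆ a ∈ {a : ℝ | (a, (0 : H)) ∈ S}, (a : EReal)) = ⨅ x, f x := by
  obtain rfl : f = affineEnvelope S := funext hrep
  exact le_antisymm (iSup_axis_le_iInf_affineEnvelope S)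
    (iInf_affineEnvelope_le_iSup_axis hSclosed hSconv hproper_top)

/-- for bounded below f, sup { a : (a,0) ∈ S_f } = inf f. -/
theorem sup_axis_eq_inf
    {H : Type*} [NormedAddCommGroup H] [InnerProductSpace ℝ H] [CompleteSpace H]
    (f : H → EReal) (S : Set (ℝ × H))
    (hproper_top : ∃ x, f x ≠ ⊤) (hproper_bot : ∀ x, f x ≠ ⊥)
    (hlsc : LowerSemicontinuous f)
    (hconv : Convex ℝ {p : H × ℝ | f p.1 ≤ (p.2 : EReal)})
    (hSclosed : IsClosed S) (hSconv : Convex ℝ S)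
    (hrep : ∀ x, f x = ⨆ p ∈ S, ((p.1 + inner ℝ p.2 x : ℝ) : EReal))
    (hbdd : ∃ c : ℝ, ∀ x, (c : EReal) ≤ f x) :
    (⨆ a ∈ {a : ℝ | (a, (0 : H)) ∈ S}, (a : EReal)) = ⨅ x, f x :=
  sup_axis_eq_inf_general f S hproper_top hSclosed hSconv hrep
end

section
/- Let H be a real Hilbert space, f : H → ℝ ∪ {+∞} a proper closed convex function, and S_f an affine support set of f. If f(x) ≥ 0 for all x ∈ H, then either 0 ∈ S_f, or the unique minimizer (a*, v*) of the norm ‖(a, v)‖² = a² + ‖v‖² over S_f satisfies a* > 0. -/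
/-!
Since `0 ∉ S`, the point `(a, v)` of `S` of least norm separates `S` from the origin: with
`c = a² + ‖v‖² > 0` we have `c ≤ a b + ⟪v, w⟫` for every `(b, w) ∈ S`. If `a < 0`, dividing by `a`
shows that every affine minorant `b + ⟪w, ·⟫` is at most `c / a < 0` at `v / a`. If `a = 0`, then
moving from a point `x₀` with `f x₀ = M < ⊤` to `x₀ - t • v` lowers every minorant by at least
`t c`, so `f` is negative there once `t c > M`. Either way `f` takes a negative value.
-/

open scoped RealInnerProductSpace

theorem norm_sq_le_inner_of_isMinOn_norm {F : Type*} [NormedAddCommGroup F]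
    [InnerProductSpace ℝ F] {K : Set F} (hK : Convex ℝ K) {p : F} (hp : p ∈ K)
    (hmin : IsMinOn norm K p) {q : F} (hq : q ∈ K) : ‖p‖ ^ 2 ≤ ⟪p, q⟫ := by
  have : Nonempty K := ⟨⟨p, hp⟩⟩
  have hinf : ‖0 - p‖ = ⨅ w : K, ‖0 - (w : F)‖ := by
    simp only [zero_sub, norm_neg]
    have hbdd : BddBelow (Set.range fun w : K => ‖(w : F)‖) :=
      ⟨0, by rintro _ ⟨w, rfl⟩; positivity⟩
    exact le_antisymm (le_ciInf fun w => hmin w.2) (ciInf_le hbdd ⟨p, hp⟩)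
  have := (norm_eq_iInf_iff_real_inner_le_zero hK hp).1 hinf q hq
  rw [zero_sub, inner_neg_left, inner_sub_right, real_inner_self_eq_norm_sq] at this
  linarith

section AffineSup

variable {H : Type*} [NormedAddCommGroup H] [InnerProductSpace ℝ H]

/-- `ℝ × H` carries the sup norm, so this goes through `WithLp 2 (ℝ × H)`, whose squared norm is
`a² + ‖v‖²`. -/
theorem sq_add_norm_sq_le_mul_add_inner_of_isMinOn {S : Set (ℝ × H)} (hS : Convex ℝ S)
    {p : ℝ × H} (hp : p ∈ S) (hmin : IsMinOn (fun q : ℝ × H => q.1 ^ 2 + ‖q.2‖ ^ 2) S p)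
    {q : ℝ × H} (hq : q ∈ S) : p.1 ^ 2 + ‖p.2‖ ^ 2 ≤ p.1 * q.1 + ⟪p.2, q.2⟫ := by
  have hnorm (r : ℝ × H) : ‖WithLp.toLp 2 r‖ ^ 2 = r.1 ^ 2 + ‖r.2‖ ^ 2 := by
    simp [WithLp.prod_norm_sq_eq_of_L2]
  have hmin' : IsMinOn norm (WithLp.ofLp ⁻¹' S) (WithLp.toLp 2 p) :=
    isMinOn_iff.2 fun r hr => by
      rw [← sq_le_sq₀ (norm_nonneg _) (norm_nonneg _), ← WithLp.toLp_ofLp 2 r, hnorm, hnorm]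
      exact hmin hr
  simpa [hnorm, mul_comm] using norm_sq_le_inner_of_isMinOn_norm
    (hS.linear_preimage (WithLp.linearEquiv 2 ℝ (ℝ × H)).toLinearMap) hp hmin'
    (q := WithLp.toLp 2 q) hq

noncomputable def affineSup (S : Set (ℝ × H)) (x : H) : EReal :=
  ⨆ p ∈ S, ((p.1 + ⟪p.2, x⟫ : ℝ) : EReal)

theorem affineSup_le_coe_iff {S : Set (ℝ × H)} {x : H} {r : ℝ} :
    affineSup S x ≤ r ↔ ∀ p ∈ S, p.1 + ⟪p.2, x⟫ ≤ r := by
  simp only [affineSup, iSup₂_le_iff, EReal.coe_le_coe_iff]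

theorem affineSup_inv_smul_le {S : Set (ℝ × H)} {a c : ℝ} {v : H} (ha : a < 0)
    (hS : ∀ q ∈ S, c ≤ a * q.1 + ⟪v, q.2⟫) : affineSup S (a⁻¹ • v) ≤ (c / a : ℝ) := by
  refine affineSup_le_coe_iff.2 fun q hq => ?_
  have hq' : q.1 + ⟪q.2, a⁻¹ • v⟫ = a⁻¹ * (a * q.1 + ⟪v, q.2⟫) := by
    rw [real_inner_smul_right, real_inner_comm, mul_add, inv_mul_cancel_left₀ ha.ne]
  rw [hq', div_eq_inv_mul]
  exact mul_le_mul_of_nonpos_left (hS q hq) (inv_nonpos.2 ha.le)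

theorem affineSup_sub_smul_le {S : Set (ℝ × H)} {c M t : ℝ} {v x : H} (ht : 0 ≤ t)
    (hS : ∀ q ∈ S, c ≤ ⟪v, q.2⟫) (hx : affineSup S x ≤ M) :
    affineSup S (x - t • v) ≤ (M - t * c : ℝ) := by
  refine affineSup_le_coe_iff.2 fun q hq => ?_
  have hqx := affineSup_le_coe_iff.1 hx q hq
  have hqv := mul_le_mul_of_nonneg_left (hS q hq) ht
  rw [inner_sub_right, real_inner_smul_right, real_inner_comm v]
  linarith

end AffineSup

theorem nonneg_imp_zero_mem_or_pos_general
    {H : Type*} [NormedAddCommGroup H] [InnerProductSpace ℝ H]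
    (f : H → EReal) (S : Set (ℝ × H))
    (hproper_top : ∃ x, f x ≠ ⊤)
    (hSconv : Convex ℝ S)
    (hrep : ∀ x, f x = ⨆ p ∈ S, ((p.1 + inner ℝ p.2 x : ℝ) : EReal))
    (pstar : ℝ × H) (hpmem : pstar ∈ S)
    (hpmin : ∀ q ∈ S, pstar.1 ^ 2 + ‖pstar.2‖ ^ 2 ≤ q.1 ^ 2 + ‖q.2‖ ^ 2)
    (hfnonneg : ∀ x, (0 : EReal) ≤ f x) :
    (0 : ℝ × H) ∈ S ∨ 0 < pstar.1 := by
  by_contra! ⟨h0S, hale⟩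
  obtain ⟨a, v⟩ := pstar
  set c := a ^ 2 + ‖v‖ ^ 2
  have hc : 0 < c := by
    rcases eq_or_ne v 0 with rfl | hv
    · have ha : a ≠ 0 := by rintro rfl; exact h0S hpmem
      simp only [c, norm_zero]
      positivity
    · have := norm_pos_iff.2 hv
      positivity
  have hsep (q) (hq : q ∈ S) : c ≤ a * q.1 + ⟪v, q.2⟫ :=
    sq_add_norm_sq_le_mul_add_inner_of_isMinOn hSconv hpmem (isMinOn_iff.2 hpmin) hq
  have hf (x : H) : (0 : EReal) ≤ affineSup S x := (hfnonneg x).trans_eq (hrep x)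
  rcases hale.lt_or_eq with ha | rfl
  · have hle : (0 : ℝ) ≤ c / a := by
      exact_mod_cast (hf _).trans (affineSup_inv_smul_le ha hsep)
    exact (div_neg_of_pos_of_neg hc ha).not_ge hle
  · obtain ⟨x₀, hx₀⟩ := hproper_top
    lift f x₀ to ℝ using ⟨hx₀, ne_bot_of_le_ne_bot EReal.zero_ne_bot (hfnonneg x₀)⟩ with M hM
    have hM0 : 0 ≤ M := by exact_mod_cast hM ▸ hfnonneg x₀
    have hMx₀ : affineSup S x₀ ≤ M := ((hrep x₀).symm.trans hM.symm).le
    have hsep₀ (q) (hq : q ∈ S) : c ≤ ⟪v, q.2⟫ := by simpa using hsep q hq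
    have hle : (0 : ℝ) ≤ M - (M + 1) / c * c := by
      exact_mod_cast (hf _).trans (affineSup_sub_smul_le (by positivity) hsep₀ hMx₀)
    rw [div_mul_cancel₀ _ hc.ne'] at hle
    linarith

/-- if f ≥ 0, then either 0 ∈ S_f or the minimal-norm element (a*, v*)
of S_f satisfies a* > 0. -/
theorem nonneg_imp_zero_mem_or_pos
    {H : Type*} [NormedAddCommGroup H] [InnerProductSpace ℝ H] [CompleteSpace H]
    (f : H → EReal) (S : Set (ℝ × H))
    (hproper_top : ∃ x, f x ≠ ⊤) (hproper_bot : ∀ x, f x ≠ ⊥)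
    (hlsc : LowerSemicontinuous f)
    (hconv : Convex ℝ {p : H × ℝ | f p.1 ≤ (p.2 : EReal)})
    (hSclosed : IsClosed S) (hSconv : Convex ℝ S)
    (hrep : ∀ x, f x = ⨆ p ∈ S, ((p.1 + inner ℝ p.2 x : ℝ) : EReal))
    (pstar : ℝ × H) (hpmem : pstar ∈ S)
    (hpmin : ∀ q ∈ S, pstar.1 ^ 2 + ‖pstar.2‖ ^ 2 ≤ q.1 ^ 2 + ‖q.2‖ ^ 2)
    (hfnonneg : ∀ x, (0 : EReal) ≤ f x) :
    (0 : ℝ × H) ∈ S ∨ 0 < pstar.1 :=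
  nonneg_imp_zero_mem_or_pos_general f S hproper_top hSconv hrep pstar hpmem hpmin hfnonneg
end

section
/- Let H be a real Hilbert space, f : H → ℝ ∪ {+∞} a proper closed convex function which is bounded below, and S_f an affine support set of f. Suppose that either 0 ∈ S_f or the minimizer (a*, v*) of ‖(a, v)‖² over S_f satisfies a* > 0. Then f(x) ≥ 0 for all x ∈ H. Moreover, in the case a* > 0 one has inf_{x ∈ H} f(x) > 0. -/
/-!
The minimal-norm point `p = (a*, v*)` of the convex set `S` satisfies `⟪p, q⟫ ≥ ‖p‖²` for every
`q ∈ S`. When `a* > 0`, along the ray `y_t = (1 + t) x - (t / a*) v*` every affine piece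
`q = (b, u)` obeys `b + ⟪u, y_t⟫ ≤ (1 + t) (b + ⟪u, x⟫) - t ‖p‖² / a*`. So if `f x < ‖p‖² / a*`,
then `f` would tend to `-∞` along the ray, contradicting boundedness below: `inf f ≥ ‖p‖² / a* > 0`.
When `0 ∈ S`, the zero affine piece already gives `f ≥ 0`.
-/

open RealInnerProductSpace

lemma nonneg_of_forall_le_add_mul {a b c : ℝ} (h : ∀ t ≥ 0, c ≤ a + t * b) : 0 ≤ b := by
  by_contra! hb
  have hca : c ≤ a := by simpa using h 0 le_rfl
  have := h ((a - c + 1) / -b) (div_nonneg (by linarith) (by linarith))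
  rw [div_mul_eq_mul_div, div_neg, mul_div_cancel_right₀ _ hb.ne] at this
  linarith

section InnerProductSpace

variable {E : Type*} [NormedAddCommGroup E] [InnerProductSpace ℝ E]

theorem norm_sq_le_real_inner_of_forall_norm_le {K : Set E} (hK : Convex ℝ K) {p : E}
    (hp : p ∈ K) (hmin : ∀ q ∈ K, ‖p‖ ≤ ‖q‖) {q : E} (hq : q ∈ K) : ‖p‖ ^ 2 ≤ ⟪p, q⟫ := by
  have : Nonempty K := ⟨⟨p, hp⟩⟩
  have hinf : ‖0 - p‖ = ⨅ w : K, ‖0 - (w : E)‖ := by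
    simp only [zero_sub, norm_neg]
    exact le_antisymm (le_ciInf fun w => hmin w w.2)
      (ciInf_le ⟨0, Set.forall_mem_range.2 fun w : K => norm_nonneg (w : E)⟩ ⟨p, hp⟩)
  have := (norm_eq_iInf_iff_real_inner_le_zero hK hp).1 hinf q hq
  rw [zero_sub, inner_neg_left, inner_sub_right, real_inner_self_eq_norm_sq] at this
  linarith

end InnerProductSpace

section AffineSupport

variable {H : Type*} [NormedAddCommGroup H] [InnerProductSpace ℝ H]

theorem sq_add_norm_sq_le_of_forall_sq_add_norm_sq_le {S : Set (ℝ × H)} (hS : Convex ℝ S)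
    {p : ℝ × H} (hp : p ∈ S) (hmin : ∀ q ∈ S, p.1 ^ 2 + ‖p.2‖ ^ 2 ≤ q.1 ^ 2 + ‖q.2‖ ^ 2)
    {q : ℝ × H} (hq : q ∈ S) : p.1 ^ 2 + ‖p.2‖ ^ 2 ≤ p.1 * q.1 + ⟪p.2, q.2⟫ := by
  -- Mathlib's norm on `ℝ × H` is the sup norm; the Euclidean one lives on `WithLp 2 (ℝ × H)`.
  have hnorm (r : ℝ × H) : ‖WithLp.toLp 2 r‖ ^ 2 = r.1 ^ 2 + ‖r.2‖ ^ 2 := by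
    rw [WithLp.prod_norm_sq_eq_of_L2, Real.norm_eq_abs, sq_abs]
    rfl
  have hK : Convex ℝ (WithLp.ofLp ⁻¹' S : Set (WithLp 2 (ℝ × H))) :=
    hS.linear_preimage (WithLp.linearEquiv 2 ℝ (ℝ × H)).toLinearMap
  have := norm_sq_le_real_inner_of_forall_norm_le hK (p := WithLp.toLp 2 p) hp
    (fun r hr => (pow_le_pow_iff_left₀ (norm_nonneg _) (norm_nonneg _) two_ne_zero).1
      (by rw [hnorm, ← WithLp.toLp_ofLp 2 r, hnorm]; exact hmin _ hr))
    (q := WithLp.toLp 2 q) hq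
  rwa [hnorm, WithLp.prod_inner_apply, Real.inner_apply] at this

theorem add_inner_homothety (p q : ℝ × H) (x : H) (t : ℝ) (hp : p.1 ≠ 0) :
    q.1 + ⟪q.2, (1 + t) • x - (t / p.1) • p.2⟫
      = (1 + t) * (q.1 + ⟪q.2, x⟫) - t / p.1 * (p.1 * q.1 + ⟪p.2, q.2⟫) := by
  rw [inner_sub_right, inner_smul_right, inner_smul_right, real_inner_comm p.2 q.2]
  field_simp
  ring

variable {f : H → EReal} {S : Set (ℝ × H)}

theorem le_coe_iff_forall_add_inner_le
    (hrep : ∀ x, f x = ⨆ p ∈ S, ((p.1 + inner ℝ p.2 x : ℝ) : EReal)) {x : H} {ε : ℝ} :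
    f x ≤ ε ↔ ∀ q ∈ S, q.1 + ⟪q.2, x⟫ ≤ ε := by
  simp only [hrep, iSup₂_le_iff, EReal.coe_le_coe_iff]

theorem coe_div_le_of_bddBelow
    (hrep : ∀ x, f x = ⨆ p ∈ S, ((p.1 + inner ℝ p.2 x : ℝ) : EReal))
    (hbdd : ∃ c : ℝ, ∀ x, (c : EReal) ≤ f x) {p : ℝ × H} (hp : 0 < p.1) {R : ℝ}
    (hR : ∀ q ∈ S, R ≤ p.1 * q.1 + ⟪p.2, q.2⟫) (x : H) : ((R / p.1 : ℝ) : EReal) ≤ f x := by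
  obtain ⟨c, hc⟩ := hbdd
  by_contra! hlt
  obtain ⟨ε, hxε, hεR⟩ := EReal.lt_iff_exists_real_btwn.1 hlt
  have hx := (le_coe_iff_forall_add_inner_le hrep).1 hxε.le
  have hray (t : ℝ) (ht : 0 ≤ t) : c ≤ ε + t * (ε - R / p.1) := by
    have hfy : f ((1 + t) • x - (t / p.1) • p.2) ≤ (ε + t * (ε - R / p.1) : ℝ) := by
      refine (le_coe_iff_forall_add_inner_le hrep).2 fun q hq => ?_
      have h₁ := mul_le_mul_of_nonneg_left (hx q hq) (by linarith : (0 : ℝ) ≤ 1 + t)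
      have h₂ := mul_le_mul_of_nonneg_left (hR q hq) (div_nonneg ht hp.le)
      have h₃ : t / p.1 * R = t * (R / p.1) := by ring
      rw [add_inner_homothety p q x t hp.ne']
      linarith
    exact_mod_cast (hc _).trans hfy
  have := nonneg_of_forall_le_add_mul hray
  exact absurd hεR (not_lt.2 (EReal.coe_le_coe_iff.2 (by linarith)))

end AffineSupport

theorem zero_mem_or_pos_imp_nonneg_general
    {H : Type*} [NormedAddCommGroup H] [InnerProductSpace ℝ H]
    (f : H → EReal) (S : Set (ℝ × H))
    (hSconv : Convex ℝ S)
    (hrep : ∀ x, f x = ⨆ p ∈ S, ((p.1 + inner ℝ p.2 x : ℝ) : EReal))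
    (hbdd : ∃ c : ℝ, ∀ x, (c : EReal) ≤ f x)
    (pstar : ℝ × H) (hpmem : pstar ∈ S)
    (hpmin : ∀ q ∈ S, pstar.1 ^ 2 + ‖pstar.2‖ ^ 2 ≤ q.1 ^ 2 + ‖q.2‖ ^ 2)
    (hyp : (0 : ℝ × H) ∈ S ∨ 0 < pstar.1) :
    (∀ x, (0 : EReal) ≤ f x)
      ∧ (0 < pstar.1 → ∃ γ : ℝ, 0 < γ ∧ ∀ x, (γ : EReal) ≤ f x) := by
  have hpos (hA : 0 < pstar.1) : ∃ γ : ℝ, 0 < γ ∧ ∀ x, (γ : EReal) ≤ f x :=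
    ⟨_, div_pos (by positivity) hA, coe_div_le_of_bddBelow hrep hbdd hA
      fun _ hq => sq_add_norm_sq_le_of_forall_sq_add_norm_sq_le hSconv hpmem hpmin hq⟩
  refine ⟨fun x => ?_, hpos⟩
  rcases hyp with h0 | hA
  · rw [hrep]
    simpa using le_biSup (fun p : ℝ × H => ((p.1 + inner ℝ p.2 x : ℝ) : EReal)) h0
  · obtain ⟨γ, hγ, hγf⟩ := hpos hA
    exact (EReal.coe_nonneg.2 hγ.le).trans (hγf x)

/-- if f is bounded below and either 0 ∈ S_f or the minimal-norm element
(a*, v*) of S_f has a* > 0, then f ≥ 0; moreover if a* > 0 then inf f > 0. -/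
theorem zero_mem_or_pos_imp_nonneg
    {H : Type*} [NormedAddCommGroup H] [InnerProductSpace ℝ H] [CompleteSpace H]
    (f : H → EReal) (S : Set (ℝ × H))
    (hproper_top : ∃ x, f x ≠ ⊤) (hproper_bot : ∀ x, f x ≠ ⊥)
    (hlsc : LowerSemicontinuous f)
    (hconv : Convex ℝ {p : H × ℝ | f p.1 ≤ (p.2 : EReal)})
    (hSclosed : IsClosed S) (hSconv : Convex ℝ S)
    (hrep : ∀ x, f x = ⨆ p ∈ S, ((p.1 + inner ℝ p.2 x : ℝ) : EReal))
    (hbdd : ∃ c : ℝ, ∀ x, (c : EReal) ≤ f x)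
    (pstar : ℝ × H) (hpmem : pstar ∈ S)
    (hpmin : ∀ q ∈ S, pstar.1 ^ 2 + ‖pstar.2‖ ^ 2 ≤ q.1 ^ 2 + ‖q.2‖ ^ 2)
    (hyp : (0 : ℝ × H) ∈ S ∨ 0 < pstar.1) :
    (∀ x, (0 : EReal) ≤ f x)
      ∧ (0 < pstar.1 → ∃ γ : ℝ, 0 < γ ∧ ∀ x, (γ : EReal) ≤ f x) :=
  zero_mem_or_pos_imp_nonneg_general f S hSconv hrep hbdd pstar hpmem hpmin hyp
end

section
/- Let H be a real Hilbert space, f : H → ℝ ∪ {+∞} a proper closed convex function which is bounded below, and S_f an affine support set of f. Let (a*, v*) be the minimizer of ‖(a, v)‖² over S_f. Then f is nonnegative on H if and only if a* ≥ 0. Furthermore, if a* < 0, then f((1/a*) v*) < 0. -/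
open scoped RealInnerProductSpace

/-!
`(a*, v*)` is the projection of the origin onto `S`, so `a* a + ⟪v*, v⟫ ≥ a*² + ‖v*‖²` for every
`(a, v) ∈ S`. If `a* < 0`, dividing by `a*` bounds every affine minorant at `v* / a*` by
`(a*² + ‖v*‖²) / a* < 0`.

Conversely, let `m = inf f`, finite as soon as `f` takes a negative value. Then `(m, 0) ∈ S`:
otherwise a functional `(a, v) ↦ b a + ⟪z, v⟫` separates `(m, 0)` from `S`. For `b < 0` the
point `z / b` has `f (z / b) < m`; for `b ≥ 0` the slopes of `S` increase uniformly along some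
direction, which drives `f` below `m`. Testing the projection inequality at `(m, 0)` with
`a* ≥ 0` and `m < 0` forces `(a*, v*) = 0 ∈ S`, whence `f ≥ 0`.
-/

theorem norm_sq_le_inner_of_forall_norm_le {F : Type*} [NormedAddCommGroup F]
    [InnerProductSpace ℝ F] {K : Set F} (hK : Convex ℝ K) {v w : F} (hv : v ∈ K)
    (hmin : ∀ u ∈ K, ‖v‖ ≤ ‖u‖) (hw : w ∈ K) : ‖v‖ ^ 2 ≤ ⟪v, w⟫ := by
  have hinf : ‖0 - v‖ = ⨅ u : K, ‖0 - (u : F)‖ := by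
    have : Nonempty K := ⟨⟨v, hv⟩⟩
    simp only [zero_sub, norm_neg]
    exact le_antisymm (le_ciInf fun u => hmin u u.2)
      (ciInf_le (f := fun u : K => ‖(u : F)‖) ⟨0, by rintro _ ⟨u, rfl⟩; positivity⟩ ⟨v, hv⟩)
  have h := (norm_eq_iInf_iff_real_inner_le_zero hK hv).1 hinf w hw
  rw [zero_sub, inner_neg_left, inner_sub_right, real_inner_self_eq_norm_sq] at h
  linarith

section SupAffine

variable {H : Type*} [NormedAddCommGroup H] [InnerProductSpace ℝ H]

theorem sq_add_norm_sq_le_mul_add_inner {S : Set (ℝ × H)} (hS : Convex ℝ S) {p q : ℝ × H}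
    (hp : p ∈ S) (hmin : ∀ q ∈ S, p.1 ^ 2 + ‖p.2‖ ^ 2 ≤ q.1 ^ 2 + ‖q.2‖ ^ 2) (hq : q ∈ S) :
    p.1 ^ 2 + ‖p.2‖ ^ 2 ≤ p.1 * q.1 + ⟪p.2, q.2⟫ := by
  have key := norm_sq_le_inner_of_forall_norm_le
    (hS.linear_preimage (WithLp.linearEquiv 2 ℝ (ℝ × H)).toLinearMap) (v := WithLp.toLp 2 p)
    (w := WithLp.toLp 2 q) hp (fun u hu => ?_) hq
  · simpa [WithLp.prod_norm_sq_eq_of_L2, mul_comm] using key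
  · rw [← sq_le_sq₀ (norm_nonneg _) (norm_nonneg _), WithLp.prod_norm_sq_eq_of_L2,
      WithLp.prod_norm_sq_eq_of_L2]
    simpa using hmin _ hu

theorem exists_forall_apply_eq_mul_add_inner [CompleteSpace H] (φ : StrongDual ℝ (ℝ × H)) :
    ∃ (b : ℝ) (z : H), ∀ p : ℝ × H, φ p = b * p.1 + ⟪z, p.2⟫ := by
  refine ⟨φ (1, 0), (InnerProductSpace.toDual ℝ H).symm (φ.comp (ContinuousLinearMap.inr ℝ ℝ H)),
    fun p => ?_⟩
  rw [InnerProductSpace.toDual_symm_apply, ContinuousLinearMap.comp_apply,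
    ContinuousLinearMap.inr_apply, mul_comm, ← smul_eq_mul, ← map_smul, ← map_add]
  simp

noncomputable def supAffine (S : Set (ℝ × H)) (x : H) : EReal :=
  ⨆ p ∈ S, ((p.1 + ⟪p.2, x⟫ : ℝ) : EReal)

variable {S : Set (ℝ × H)}

theorem supAffine_le_iff {x : H} {r : ℝ} :
    supAffine S x ≤ r ↔ ∀ p ∈ S, p.1 + ⟪p.2, x⟫ ≤ r := by
  simp only [supAffine, iSup₂_le_iff, EReal.coe_le_coe_iff]

theorem le_supAffine {p : ℝ × H} (hp : p ∈ S) (x : H) :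
    ((p.1 + ⟪p.2, x⟫ : ℝ) : EReal) ≤ supAffine S x :=
  le_iSup₂ (f := fun p (_ : p ∈ S) => ((p.1 + ⟪p.2, x⟫ : ℝ) : EReal)) p hp

theorem supAffine_inv_smul_le {b u : ℝ} {z : H} (hb : b < 0)
    (h : ∀ p ∈ S, u ≤ b * p.1 + ⟪z, p.2⟫) : supAffine S (b⁻¹ • z) ≤ (u / b : ℝ) := by
  refine supAffine_le_iff.2 fun p hp => ?_
  have := mul_le_mul_of_nonpos_left (h p hp) (inv_nonpos.2 hb.le)
  rw [real_inner_smul_right, real_inner_comm, div_eq_inv_mul]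
  rwa [mul_add, ← mul_assoc, inv_mul_cancel₀ hb.ne, one_mul] at this

theorem supAffine_sub_smul_le {x w : H} {r δ t : ℝ} (ht : 0 ≤ t) (hx : supAffine S x ≤ r)
    (hw : ∀ p ∈ S, δ ≤ ⟪p.2, w⟫) : supAffine S (x - t • w) ≤ (r - t * δ : ℝ) := by
  rw [supAffine_le_iff] at hx ⊢
  intro p hp
  rw [inner_sub_right, real_inner_smul_right]
  nlinarith [hx p hp, hw p hp]

theorem mk_zero_mem_of_iInf_supAffine_eq [CompleteSpace H] (hSclosed : IsClosed S)
    (hSconv : Convex ℝ S) {m : ℝ} (hm : ⨅ x, supAffine S x = m) : (m, (0 : H)) ∈ S := by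
  have hlow (x : H) : (m : EReal) ≤ supAffine S x := hm ▸ iInf_le _ x
  have hnear (ε : ℝ) (hε : 0 < ε) : ∃ x, supAffine S x ≤ (m + ε : ℝ) := by
    obtain ⟨x, hx⟩ := iInf_lt_iff.1 (hm ▸ EReal.coe_lt_coe_iff.2 (lt_add_of_pos_right m hε))
    exact ⟨x, hx.le⟩
  -- Slopes uniformly increasing along `w` would let `x - 2 • w` undercut a `δ`-minimiser `x` by `δ`.
  have no_gap (x w : H) (δ : ℝ) (hδ : 0 < δ) (hx : supAffine S x ≤ (m + δ : ℝ))
      (hw : ∀ p ∈ S, δ ≤ ⟪p.2, w⟫) : False := by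
    have : m ≤ m + δ - 2 * δ :=
      EReal.coe_le_coe_iff.1 ((hlow _).trans (supAffine_sub_smul_le zero_le_two hx hw))
    linarith
  by_contra hnot
  obtain ⟨φ, u, hφm, hφS⟩ := geometric_hahn_banach_point_closed hSconv hSclosed hnot
  obtain ⟨b, z, hφ⟩ := exists_forall_apply_eq_mul_add_inner φ
  simp only [hφ, inner_zero_right, add_zero] at hφm hφS
  rcases lt_trichotomy b 0 with hb | hb | hb
  · have : m ≤ u / b :=
      EReal.coe_le_coe_iff.1 ((hlow _).trans (supAffine_inv_smul_le hb fun p hp => (hφS p hp).le))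
    rw [le_div_iff_of_neg hb] at this
    linarith
  · simp only [hb, zero_mul, zero_add] at hφm hφS
    obtain ⟨x, hx⟩ := hnear u hφm
    exact no_gap x z u hφm hx fun p hp => real_inner_comm z p.2 ▸ (hφS p hp).le
  · set δ := (u / b - m) / 2 with hδ_def
    have hδ : 0 < δ := by
      have : m < u / b := by rwa [lt_div_iff₀ hb, mul_comm]
      linarith [hδ_def]
    obtain ⟨x, hx⟩ := hnear δ hδ
    refine no_gap x (b⁻¹ • z - x) δ hδ hx fun p hp => ?_
    have h1 := supAffine_le_iff.1 hx p hp
    have h2 : u / b < p.1 + b⁻¹ * ⟪z, p.2⟫ := by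
      rw [div_lt_iff₀ hb]
      calc u < b * p.1 + ⟪z, p.2⟫ := hφS p hp
        _ = _ := by field_simp
    rw [inner_sub_right, real_inner_smul_right, real_inner_comm]
    linarith [hδ_def]

end SupAffine

theorem nonneg_iff_astar_nonneg_general
    {H : Type*} [NormedAddCommGroup H] [InnerProductSpace ℝ H] [CompleteSpace H]
    (f : H → EReal) (S : Set (ℝ × H))
    (hSclosed : IsClosed S) (hSconv : Convex ℝ S)
    (hrep : ∀ x, f x = ⨆ p ∈ S, ((p.1 + inner ℝ p.2 x : ℝ) : EReal))
    (hbdd : ∃ c : ℝ, ∀ x, (c : EReal) ≤ f x)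
    (pstar : ℝ × H) (hpmem : pstar ∈ S)
    (hpmin : ∀ q ∈ S, pstar.1 ^ 2 + ‖pstar.2‖ ^ 2 ≤ q.1 ^ 2 + ‖q.2‖ ^ 2) :
    ((∀ x, (0 : EReal) ≤ f x) ↔ 0 ≤ pstar.1)
      ∧ (pstar.1 < 0 → f (pstar.1⁻¹ • pstar.2) < 0) := by
  obtain rfl : f = supAffine S := funext hrep
  have hvar {q : ℝ × H} (hq : q ∈ S) := sq_add_norm_sq_le_mul_add_inner hSconv hpmem hpmin hq
  have hneg (ha : pstar.1 < 0) : supAffine S (pstar.1⁻¹ • pstar.2) < 0 := by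
    have hpos : 0 < pstar.1 ^ 2 + ‖pstar.2‖ ^ 2 := by nlinarith [sq_nonneg ‖pstar.2‖]
    calc _ ≤ (((pstar.1 ^ 2 + ‖pstar.2‖ ^ 2) / pstar.1 : ℝ) : EReal) :=
          supAffine_inv_smul_le ha fun q hq => hvar hq
      _ < 0 := EReal.coe_lt_coe_iff.2 (div_neg_of_pos_of_neg hpos ha)
  refine ⟨⟨fun hf => not_lt.1 fun ha => (hf _).not_gt (hneg ha), fun ha => ?_⟩, hneg⟩
  by_contra! ⟨x₀, hx₀⟩
  obtain ⟨c, hc⟩ := hbdd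
  set M := ⨅ x, supAffine S x
  have hM_ne_top : M ≠ ⊤ := ((iInf_le _ x₀).trans_lt (hx₀.trans EReal.zero_lt_top)).ne
  have hM_ne_bot : M ≠ ⊥ := ne_bot_of_le_ne_bot (EReal.coe_ne_bot c) (le_iInf hc)
  have hM : M = M.toReal := (EReal.coe_toReal hM_ne_top hM_ne_bot).symm
  have hM_neg : M.toReal < 0 := EReal.coe_lt_coe_iff.1 (hM ▸ (iInf_le _ x₀).trans_lt hx₀)
  have hproj := hvar (mk_zero_mem_of_iInf_supAffine_eq hSclosed hSconv hM)
  rw [inner_zero_right, add_zero] at hproj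
  have ha0 : pstar.1 = 0 := by nlinarith [sq_nonneg ‖pstar.2‖]
  have hv0 : pstar.2 = 0 := norm_eq_zero.1 (by nlinarith [norm_nonneg pstar.2])
  have := (le_supAffine hpmem x₀).trans_lt hx₀
  simp [ha0, hv0] at this

/-- for bounded below f, f is nonnegative iff a* ≥ 0, where (a*, v*)
is the minimal-norm element of S_f; moreover if a* < 0 then f((1/a*) v*) < 0. -/
theorem nonneg_iff_astar_nonneg
    {H : Type*} [NormedAddCommGroup H] [InnerProductSpace ℝ H] [CompleteSpace H]
    (f : H → EReal) (S : Set (ℝ × H))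
    (hproper_top : ∃ x, f x ≠ ⊤) (hproper_bot : ∀ x, f x ≠ ⊥)
    (hlsc : LowerSemicontinuous f)
    (hconv : Convex ℝ {p : H × ℝ | f p.1 ≤ (p.2 : EReal)})
    (hSclosed : IsClosed S) (hSconv : Convex ℝ S)
    (hrep : ∀ x, f x = ⨆ p ∈ S, ((p.1 + inner ℝ p.2 x : ℝ) : EReal))
    (hbdd : ∃ c : ℝ, ∀ x, (c : EReal) ≤ f x)
    (pstar : ℝ × H) (hpmem : pstar ∈ S)
    (hpmin : ∀ q ∈ S, pstar.1 ^ 2 + ‖pstar.2‖ ^ 2 ≤ q.1 ^ 2 + ‖q.2‖ ^ 2) :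
    ((∀ x, (0 : EReal) ≤ f x) ↔ 0 ≤ pstar.1)
      ∧ (pstar.1 < 0 → f (pstar.1⁻¹ • pstar.2) < 0) :=
  nonneg_iff_astar_nonneg_general f S hSclosed hSconv hrep hbdd pstar hpmem hpmin
end

section
/- Let H be a real Hilbert space, f, g : H → ℝ ∪ {+∞} proper closed convex functions with dom f ∩ dom g ≠ ∅, and S_f, S_g affine support sets of f and g respectively. If f(x) ≥ 0 for every x with g(x) ≤ 0, then either 0 ∈ cl conv(S_f ∪ S_g), or the minimizer (a*, v*) of ‖(a, v)‖² over cl conv(S_f ∪ S_g) satisfies a* > 0. -/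
/-!
Suppose neither alternative holds, so `p* = (a*, v*) ≠ 0` and `a* ≤ 0`. Minimality of `‖p*‖²` on
the closed convex set `C = cl conv (S_f ∪ S_g)` gives the variational inequality
`‖p*‖² ≤ a* a + ⟪v*, v⟫` for all `(a, v) ∈ C`. Consequently all affine minorants
`a + ⟪v, ·⟫` from `S_f ∪ S_g` are bounded by one negative constant at a single point `x`: at
`x = v* / a*` if `a* < 0`, and at `x = x₀ - t • v*` for `x₀ ∈ dom f ∩ dom g` and large `t` if
`a* = 0`. Then `g x < 0` and `f x < 0`, contradicting `f ≥ 0` on `{g ≤ 0}`.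
-/

open scoped RealInnerProductSpace

theorem Convex.norm_sq_le_inner_of_forall_norm_le {E : Type*} [NormedAddCommGroup E]
    [InnerProductSpace ℝ E] {K : Set E} (hK : Convex ℝ K) {p q : E} (hp : p ∈ K) (hq : q ∈ K)
    (hmin : ∀ q ∈ K, ‖p‖ ≤ ‖q‖) : ‖p‖ ^ 2 ≤ ⟪p, q⟫ := by
  have hlocal : IsLocalMinOn (fun x : E => ‖x‖ ^ 2) K p :=
    IsMinOn.localize fun x hx => pow_le_pow_left₀ (norm_nonneg p) (hmin x hx) 2
  have hfirst := hlocal.hasFDerivWithinAt_nonneg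
    (hasStrictFDerivAt_norm_sq p).hasFDerivAt.hasFDerivWithinAt
    (sub_mem_posTangentConeAt_of_segment_subset (hK.segment_subset hp hq))
  simp only [FunLike.coe_smul, Pi.smul_apply, innerSL_apply_apply, inner_sub_right,
    real_inner_self_eq_norm_sq, nsmul_eq_mul, Nat.cast_ofNat] at hfirst
  linarith

theorem Convex.sq_add_norm_sq_le_of_forall_le {H : Type*} [NormedAddCommGroup H]
    [InnerProductSpace ℝ H] {C : Set (ℝ × H)} (hC : Convex ℝ C) {p q : ℝ × H} (hp : p ∈ C)
    (hq : q ∈ C) (hmin : ∀ q ∈ C, p.1 ^ 2 + ‖p.2‖ ^ 2 ≤ q.1 ^ 2 + ‖q.2‖ ^ 2) :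
    p.1 ^ 2 + ‖p.2‖ ^ 2 ≤ p.1 * q.1 + ⟪p.2, q.2⟫ := by
  -- `ℝ × H` carries the sup norm; `a ^ 2 + ‖v‖ ^ 2` is the squared norm in `WithLp 2 (ℝ × H)`.
  have hnorm (r : ℝ × H) : ‖WithLp.toLp 2 r‖ ^ 2 = r.1 ^ 2 + ‖r.2‖ ^ 2 := by
    simp [WithLp.prod_norm_sq_eq_of_L2]
  have hK : Convex ℝ (WithLp.ofLp ⁻¹' C : Set (WithLp 2 (ℝ × H))) :=
    hC.linear_preimage (WithLp.linearEquiv 2 ℝ (ℝ × H)).toLinearMap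
  have := hK.norm_sq_le_inner_of_forall_norm_le (p := WithLp.toLp 2 p) (q := WithLp.toLp 2 q)
    hp hq fun r hr => by
      rw [← sq_le_sq₀ (norm_nonneg _) (norm_nonneg _), hnorm, ← WithLp.toLp_ofLp 2 r, hnorm]
      exact hmin _ hr
  simpa [hnorm, mul_comm] using this

theorem Prod.sq_add_norm_sq_pos {H : Type*} [NormedAddCommGroup H] {p : ℝ × H} (hp : p ≠ 0) :
    0 < p.1 ^ 2 + ‖p.2‖ ^ 2 := by
  rcases eq_or_ne p.1 0 with h1 | h1
  · have h2 : p.2 ≠ 0 := fun h2 => hp (Prod.ext h1 h2)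
    positivity
  · positivity

section AffineSupport

variable {H : Type*} [NormedAddCommGroup H] [InnerProductSpace ℝ H]

theorem iSup_add_inner_le_coe_iff (S : Set (ℝ × H)) (x : H) (c : ℝ) :
    ⨆ p ∈ S, ((p.1 + ⟪p.2, x⟫ : ℝ) : EReal) ≤ c ↔ ∀ p ∈ S, p.1 + ⟪p.2, x⟫ ≤ c := by
  simp only [iSup₂_le_iff, EReal.coe_le_coe_iff]

theorem exists_forall_add_inner_le_neg {S : Set (ℝ × H)} {a m : ℝ} {v : H} (hm : 0 < m)
    (ha : a ≤ 0) (hS : ∀ p ∈ S, m ≤ a * p.1 + ⟪v, p.2⟫) {x₀ : H} {c : ℝ}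
    (hx₀ : ∀ p ∈ S, p.1 + ⟪p.2, x₀⟫ ≤ c) :
    ∃ x : H, ∃ d < 0, ∀ p ∈ S, p.1 + ⟪p.2, x⟫ ≤ d := by
  rcases ha.lt_or_eq with ha | rfl
  · refine ⟨a⁻¹ • v, m / a, div_neg_of_pos_of_neg hm ha, fun p hp => ?_⟩
    have hp' : p.1 + ⟪p.2, a⁻¹ • v⟫ = (a * p.1 + ⟪v, p.2⟫) / a := by
      rw [real_inner_smul_right, real_inner_comm, add_div, mul_div_cancel_left₀ _ ha.ne,
        inv_mul_eq_div]
    rw [hp']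
    exact div_le_div_of_nonpos_of_le ha.le (hS p hp)
  · set t := (|c| + 1) / m
    have htm : t * m = |c| + 1 := div_mul_cancel₀ _ hm.ne'
    refine ⟨x₀ - t • v, c - t * m, by linarith [le_abs_self c], fun p hp => ?_⟩
    have hv : m ≤ ⟪v, p.2⟫ := by simpa using hS p hp
    have ht : 0 ≤ t := by positivity
    rw [inner_sub_right, real_inner_smul_right, real_inner_comm v]
    linarith [hx₀ p hp, mul_le_mul_of_nonneg_left hv ht]

end AffineSupport

theorem nonneg_on_sublevel_imp_zero_mem_or_pos_general
    {H : Type*} [NormedAddCommGroup H] [InnerProductSpace ℝ H]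
    (f g : H → EReal) (Sf Sg : Set (ℝ × H))
    (hfrep : ∀ x, f x = ⨆ p ∈ Sf, ((p.1 + inner ℝ p.2 x : ℝ) : EReal))
    (hgrep : ∀ x, g x = ⨆ p ∈ Sg, ((p.1 + inner ℝ p.2 x : ℝ) : EReal))
    (hdom : ∃ x, f x ≠ ⊤ ∧ g x ≠ ⊤)
    (pstar : ℝ × H) (hpmem : pstar ∈ closure (convexHull ℝ (Sf ∪ Sg)))
    (hpmin : ∀ q ∈ closure (convexHull ℝ (Sf ∪ Sg)),
      pstar.1 ^ 2 + ‖pstar.2‖ ^ 2 ≤ q.1 ^ 2 + ‖q.2‖ ^ 2)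
    (hfnonneg : ∀ x, g x ≤ 0 → (0 : EReal) ≤ f x) :
    (0 : ℝ × H) ∈ closure (convexHull ℝ (Sf ∪ Sg)) ∨ 0 < pstar.1 := by
  by_contra! ⟨h0, ha⟩
  have hm := Prod.sq_add_norm_sq_pos fun h => h0 (h ▸ hpmem)
  have hS (p) (hp : p ∈ Sf ∪ Sg) := (convex_convexHull ℝ _).closure.sq_add_norm_sq_le_of_forall_le
    hpmem (subset_closure (subset_convexHull ℝ _ hp)) hpmin
  obtain ⟨x₀, hfx₀, hgx₀⟩ := hdom
  set c := max (f x₀).toReal (g x₀).toReal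
  have hfc : f x₀ ≤ c := (EReal.le_coe_toReal hfx₀).trans (EReal.coe_le_coe_iff.2 (le_max_left ..))
  have hgc : g x₀ ≤ c := (EReal.le_coe_toReal hgx₀).trans (EReal.coe_le_coe_iff.2 (le_max_right ..))
  rw [hfrep, iSup_add_inner_le_coe_iff] at hfc
  rw [hgrep, iSup_add_inner_le_coe_iff] at hgc
  have hx₀ : ∀ p ∈ Sf ∪ Sg, p.1 + ⟪p.2, x₀⟫ ≤ c := by
    rintro p (hp | hp)
    exacts [hfc p hp, hgc p hp]
  obtain ⟨x, d, hd, hx⟩ := exists_forall_add_inner_le_neg hm ha hS hx₀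
  have hfx : f x ≤ d := by rw [hfrep, iSup_add_inner_le_coe_iff]; exact fun p hp => hx p (.inl hp)
  have hgx : g x ≤ d := by rw [hgrep, iSup_add_inner_le_coe_iff]; exact fun p hp => hx p (.inr hp)
  have hf0 := (hfnonneg x (hgx.trans (EReal.coe_nonpos.2 hd.le))).trans hfx
  exact hd.not_ge (EReal.coe_nonneg.1 hf0)

/-- if f ≥ 0 on { g ≤ 0 }, then either 0 ∈ cl conv(S_f ∪ S_g), or the
minimal-norm element of cl conv(S_f ∪ S_g) has positive first component. -/
theorem nonneg_on_sublevel_imp_zero_mem_or_pos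
    {H : Type*} [NormedAddCommGroup H] [InnerProductSpace ℝ H] [CompleteSpace H]
    (f g : H → EReal) (Sf Sg : Set (ℝ × H))
    (hfproper_top : ∃ x, f x ≠ ⊤) (hfproper_bot : ∀ x, f x ≠ ⊥)
    (hgproper_top : ∃ x, g x ≠ ⊤) (hgproper_bot : ∀ x, g x ≠ ⊥)
    (hflsc : LowerSemicontinuous f) (hglsc : LowerSemicontinuous g)
    (hfconv : Convex ℝ {p : H × ℝ | f p.1 ≤ (p.2 : EReal)})
    (hgconv : Convex ℝ {p : H × ℝ | g p.1 ≤ (p.2 : EReal)})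
    (hSfclosed : IsClosed Sf) (hSfconv : Convex ℝ Sf)
    (hSgclosed : IsClosed Sg) (hSgconv : Convex ℝ Sg)
    (hfrep : ∀ x, f x = ⨆ p ∈ Sf, ((p.1 + inner ℝ p.2 x : ℝ) : EReal))
    (hgrep : ∀ x, g x = ⨆ p ∈ Sg, ((p.1 + inner ℝ p.2 x : ℝ) : EReal))
    (hdom : ∃ x, f x ≠ ⊤ ∧ g x ≠ ⊤)
    (pstar : ℝ × H) (hpmem : pstar ∈ closure (convexHull ℝ (Sf ∪ Sg)))
    (hpmin : ∀ q ∈ closure (convexHull ℝ (Sf ∪ Sg)),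
      pstar.1 ^ 2 + ‖pstar.2‖ ^ 2 ≤ q.1 ^ 2 + ‖q.2‖ ^ 2)
    (hfnonneg : ∀ x, g x ≤ 0 → (0 : EReal) ≤ f x) :
    (0 : ℝ × H) ∈ closure (convexHull ℝ (Sf ∪ Sg)) ∨ 0 < pstar.1 :=
  nonneg_on_sublevel_imp_zero_mem_or_pos_general f g Sf Sg hfrep hgrep hdom pstar hpmem hpmin
    hfnonneg
end

section
/- Let f_i : ℝᵈ → ℝ, i = 1, …, k, be proper closed convex functions with affine support sets S_{f_i}, and let λ_i ≥ 0. Then cl(λ₁ S_{f₁} + ⋯ + λ_k S_{f_k}) (the closure of the Minkowski sum of scaled sets) is an affine support set of the function f = λ₁ f₁ + ⋯ + λ_k f_k. -/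
open Pointwise

/-!
For fixed `x`, `(a, v) ↦ a + ⟪v, x⟫` is a continuous linear functional. A linear functional maps
Minkowski sums and scalings of sets to those of their images, and a nonnegative combination of
least upper bounds of sets of reals is the least upper bound of the same combination of the sets;
so for each `x` the supremum over `∑ λᵢ Sᵢ` is `∑ λᵢ fᵢ x`. Passing to the closure does not change
the supremum of a continuous function.
-/

namespace EReal

theorem isLUB_coe_image_iff {s : Set ℝ} {a : ℝ} :
    IsLUB (((↑) : ℝ → EReal) '' s) (a : EReal) ↔ IsLUB s a := by
  constructor
  · intro h
    refine ⟨fun x hx => EReal.coe_le_coe_iff.1 (h.1 ⟨x, hx, rfl⟩), fun c hc => ?_⟩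
    exact EReal.coe_le_coe_iff.1 (h.2 (coe_strictMono.monotone.mem_upperBounds_image hc))
  · intro h
    refine ⟨coe_strictMono.monotone.mem_upperBounds_image h.1, fun c hc => ?_⟩
    obtain ⟨x, hx⟩ := h.nonempty
    induction c using EReal.rec with
    | bot => exact absurd (hc ⟨x, hx, rfl⟩) (bot_lt_coe x).not_ge
    | coe c =>
      exact EReal.coe_le_coe_iff.2 (h.2 fun y hy => EReal.coe_le_coe_iff.1 (hc ⟨y, hy, rfl⟩))
    | top => exact le_top

theorem coe_eq_biSup_coe_iff_isLUB {β : Type*} {A : Set β} {g : β → ℝ} {a : ℝ} :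
    (a : EReal) = ⨆ p ∈ A, (g p : EReal) ↔ IsLUB (g '' A) a := by
  rw [← sSup_image, ← Set.image_image ((↑) : ℝ → EReal) g A, ← isLUB_coe_image_iff]
  exact ⟨fun h => h ▸ isLUB_sSup _, fun h => h.sSup_eq.symm⟩

end EReal

theorem IsLUB.finsetSum {ι G : Type*} [AddCommGroup G] [PartialOrder G] [IsOrderedAddMonoid G]
    {s : Finset ι} {T : ι → Set G} {b : ι → G} (h : ∀ i ∈ s, IsLUB (T i) (b i)) :
    IsLUB (∑ i ∈ s, T i) (∑ i ∈ s, b i) := by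
  classical
  induction s using Finset.induction_on with
  | empty => exact isLUB_singleton
  | insert j s hj ih =>
    rw [Finset.sum_insert hj, Finset.sum_insert hj]
    exact (h j (s.mem_insert_self j)).add (ih fun i hi => h i (Finset.mem_insert_of_mem hi))

theorem isLUB_image_finsetSum_smul {ι M : Type*} [AddCommMonoid M] [Module ℝ M]
    (φ : M →ₗ[ℝ] ℝ) {s : Finset ι} {S : ι → Set M} {l b : ι → ℝ} (hl : ∀ i ∈ s, 0 ≤ l i)
    (hS : ∀ i ∈ s, IsLUB (φ '' S i) (b i)) :
    IsLUB (φ '' ∑ i ∈ s, l i • S i) (∑ i ∈ s, l i * b i) := by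
  rw [Set.image_finsetSum]
  refine IsLUB.finsetSum fun i hi => ?_
  rw [image_smul_set]
  exact (hS i hi).mul_left (hl i hi)

theorem Continuous.isLUB_image_closure_iff {X : Type*} [TopologicalSpace X] {g : X → ℝ}
    (hg : Continuous g) {A : Set X} {a : ℝ} : IsLUB (g '' closure A) a ↔ IsLUB (g '' A) a :=
  (isLUB_iff_of_subset_of_subset_closure (Set.image_mono subset_closure)
    (image_closure_subset_closure_image hg)).symm

def affineEval {E : Type*} [NormedAddCommGroup E] [InnerProductSpace ℝ E] (x : E) :
    ℝ × E →L[ℝ] ℝ where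
  toFun p := p.1 + inner ℝ p.2 x
  map_add' p q := by
    simp only [Prod.fst_add, Prod.snd_add, inner_add_left]
    ring
  map_smul' c p := by
    simp only [Prod.smul_fst, Prod.smul_snd, real_inner_smul_left, smul_eq_mul, RingHom.id_apply]
    ring
  cont := by fun_prop

theorem affine_support_of_linear_combination_general
    {d : ℕ} (k : ℕ) (f : Fin k → EuclideanSpace ℝ (Fin d) → ℝ)
    (S : Fin k → Set (ℝ × EuclideanSpace ℝ (Fin d)))
    (hSconv : ∀ i, Convex ℝ (S i))
    (hrep : ∀ i x, ((f i x : ℝ) : EReal) = ⨆ p ∈ S i, ((p.1 + inner ℝ p.2 x : ℝ) : EReal))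
    (l : Fin k → ℝ) (hl : ∀ i, 0 ≤ l i) :
    IsClosed (closure (∑ i : Fin k, l i • S i))
      ∧ Convex ℝ (closure (∑ i : Fin k, l i • S i))
      ∧ ∀ x, (((∑ i : Fin k, l i * f i x : ℝ)) : EReal)
          = ⨆ p ∈ closure (∑ i : Fin k, l i • S i), ((p.1 + inner ℝ p.2 x : ℝ) : EReal) := by
  refine ⟨isClosed_closure, (convex_sum _ fun i _ => (hSconv i).smul (l i)).closure, fun x => ?_⟩
  have hS : ∀ i, IsLUB (affineEval x '' S i) (f i x) := fun i =>
    EReal.coe_eq_biSup_coe_iff_isLUB.1 (hrep i x)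
  refine EReal.coe_eq_biSup_coe_iff_isLUB.2 ((affineEval x).continuous.isLUB_image_closure_iff.2 ?_)
  exact isLUB_image_finsetSum_smul (affineEval x).toLinearMap (fun i _ => hl i) fun i _ => hS i

/-- the closure of the Minkowski sum of scaled affine support sets is an
affine support set of the corresponding nonnegative linear combination. -/
theorem affine_support_of_linear_combination
    {d : ℕ} (k : ℕ) (f : Fin k → EuclideanSpace ℝ (Fin d) → ℝ)
    (S : Fin k → Set (ℝ × EuclideanSpace ℝ (Fin d)))
    (hconv : ∀ i, ConvexOn ℝ Set.univ (f i))
    (hlsc : ∀ i, LowerSemicontinuous (f i))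
    (hSclosed : ∀ i, IsClosed (S i)) (hSconv : ∀ i, Convex ℝ (S i))
    (hrep : ∀ i x, ((f i x : ℝ) : EReal) = ⨆ p ∈ S i, ((p.1 + inner ℝ p.2 x : ℝ) : EReal))
    (l : Fin k → ℝ) (hl : ∀ i, 0 ≤ l i) :
    IsClosed (closure (∑ i : Fin k, l i • S i))
      ∧ Convex ℝ (closure (∑ i : Fin k, l i • S i))
      ∧ ∀ x, (((∑ i : Fin k, l i * f i x : ℝ)) : EReal)
          = ⨆ p ∈ closure (∑ i : Fin k, l i • S i), ((p.1 + inner ℝ p.2 x : ℝ) : EReal) :=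
  affine_support_of_linear_combination_general k f S hSconv hrep l hl
end

section
/- Let H be a real Hilbert space and f₁, f₂ : H → ℝ finite closed convex functions with affine support sets S_{f₁}, S_{f₂}, and let f = f₁ − f₂. Define for each x ∈ H the sets d̲f(x) = { (a − f₁(x) + ⟨v, x⟩, v) : (a, v) ∈ S_{f₁} } and d̄f(x) = { (−b + f₂(x) − ⟨w, x⟩, −w) : (b, w) ∈ S_{f₂} }. Then for all x, Δx ∈ H: f(x + Δx) − f(x) = sup_{(a,v) ∈ d̲f(x)} (a + ⟨v, Δx⟩) + inf_{(b,w) ∈ d̄f(x)} (b + ⟨w, Δx⟩), and moreover sup_{(a,v) ∈ d̲f(x)} a = 0 and inf_{(b,w) ∈ d̄f(x)} b = 0, and the sets d̲f(x), d̄f(x) are closed and convex. -/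
/-!
An element `(a, v)` of an affine support set of `f` is an affine minorant `y ↦ a + ⟪v, y⟫` of `f`.
Re-centring it at `x`, `(a, v) ↦ (a - f x + ⟪v, x⟫, v)`, turns it into a minorant of
`Δ ↦ f (x + Δ) - f x`, and the re-centred minorants still have this function as their supremum.
So the supremum over `d̲f(x)` is `f₁ (x + Δ) - f₁ x`; `d̄f(x)` is the negated re-centred support
set of `f₂`, so its infimum is `f₂ x - f₂ (x + Δ)`, and `Δ = 0` gives the normalisations.
Re-centring is an affine map of `ℝ × H` with continuous inverse, so closedness and convexity
pass from the support sets to the codifferentials.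
-/

open scoped InnerProductSpace

noncomputable section

namespace EReal

def addRightOrderIso (c : ℝ) : EReal ≃o EReal where
  toFun x := x + c
  invFun x := x - c
  left_inv _ := add_sub_cancel_right
  right_inv _ := sub_add_cancel
  map_rel_iff' := (addLECancellable_coe c).add_le_add_iff_right

lemma biSup_add_coe {ι : Type*} (s : Set ι) (g : ι → EReal) (c : ℝ) :
    ⨆ i ∈ s, (g i + c) = (⨆ i ∈ s, g i) + c :=
  ((addRightOrderIso c).map_iSup₂ fun i (_ : i ∈ s) => g i).symm

lemma biInf_neg {ι : Type*} (s : Set ι) (g : ι → EReal) :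
    ⨅ i ∈ s, -g i = -⨆ i ∈ s, g i :=
  (negOrderIso.map_iSup₂ fun i (_ : i ∈ s) => g i).symm

end EReal

variable {H : Type*} [NormedAddCommGroup H] [InnerProductSpace ℝ H]

def recenter (c : ℝ) (x : H) : ℝ × H →ᵃ[ℝ] ℝ × H where
  toFun p := (p.1 - c + ⟪p.2, x⟫_ℝ, p.2)
  linear := (LinearMap.fst ℝ ℝ H + (innerₛₗ ℝ x).comp (LinearMap.snd ℝ ℝ H)).prod
    (LinearMap.snd ℝ ℝ H)
  map_vadd' p v := by
    simp only [vadd_eq_add, Prod.fst_add, Prod.snd_add, real_inner_comm x, inner_add_right,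
      LinearMap.prod_apply, Function.prod_apply, LinearMap.add_apply, LinearMap.fst_apply,
      LinearMap.coe_snd, LinearMap.coe_comp, Function.comp_apply, coe_innerₛₗ_apply, Prod.mk_add_mk]
    congr 1
    ring

@[simp]
lemma recenter_apply (c : ℝ) (x : H) (p : ℝ × H) :
    recenter c x p = (p.1 - c + ⟪p.2, x⟫_ℝ, p.2) := rfl

lemma continuous_recenter (c : ℝ) (x : H) : Continuous (recenter c x) := by
  change Continuous fun p : ℝ × H => (p.1 - c + ⟪p.2, x⟫_ℝ, p.2)
  fun_prop

lemma recenter_neg_recenter (c : ℝ) (x : H) (p : ℝ × H) :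
    recenter (-c) (-x) (recenter c x p) = p := by
  simp only [recenter_apply, inner_neg_right]; ring_nf

lemma isClosed_image_recenter {S : Set (ℝ × H)} (hS : IsClosed S) (c : ℝ) (x : H) :
    IsClosed (recenter c x '' S) := by
  rw [Set.image_eq_preimage_of_inverse (recenter_neg_recenter c x)
    fun p => by simpa only [neg_neg] using recenter_neg_recenter (-c) (-x) p]
  exact hS.preimage (continuous_recenter _ _)

lemma recenter_fst_add_inner (c : ℝ) (x Δ : H) (p : ℝ × H) :
    (recenter c x p).1 + ⟪(recenter c x p).2, Δ⟫_ℝ = p.1 + ⟪p.2, x + Δ⟫_ℝ + -c := by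
  simp only [recenter_apply, inner_add_right]; ring

variable {f : H → ℝ} {S : Set (ℝ × H)}

lemma biSup_image_recenter
    (hS : ∀ y, (f y : EReal) = ⨆ p ∈ S, ((p.1 + ⟪p.2, y⟫_ℝ : ℝ) : EReal)) (x Δ : H) :
    ⨆ q ∈ recenter (f x) x '' S, ((q.1 + ⟪q.2, Δ⟫_ℝ : ℝ) : EReal) =
      ((f (x + Δ) - f x : ℝ) : EReal) := by
  simp_rw [iSup_image, recenter_fst_add_inner, EReal.coe_add _ (-f x)]
  rw [EReal.biSup_add_coe, ← hS, ← EReal.coe_add, sub_eq_add_neg]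

lemma biInf_neg_image_recenter
    (hS : ∀ y, (f y : EReal) = ⨆ p ∈ S, ((p.1 + ⟪p.2, y⟫_ℝ : ℝ) : EReal)) (x Δ : H) :
    ⨅ q ∈ -(recenter (f x) x '' S), ((q.1 + ⟪q.2, Δ⟫_ℝ : ℝ) : EReal) =
      ((f x - f (x + Δ) : ℝ) : EReal) := by
  rw [← Set.image_neg_eq_neg, iInf_image]
  simp_rw [Prod.fst_neg, Prod.snd_neg, inner_neg_left, ← neg_add, EReal.coe_neg]
  rw [EReal.biInf_neg, biSup_image_recenter hS, ← EReal.coe_neg, neg_sub]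

end

theorem global_codifferential_properties_general
    {H : Type*} [NormedAddCommGroup H] [InnerProductSpace ℝ H]
    (f₁ f₂ : H → ℝ) (S₁ S₂ : Set (ℝ × H))
    (hSclosed₁ : IsClosed S₁) (hSconv₁ : Convex ℝ S₁)
    (hSclosed₂ : IsClosed S₂) (hSconv₂ : Convex ℝ S₂)
    (hrep₁ : ∀ x, ((f₁ x : ℝ) : EReal) = ⨆ p ∈ S₁, ((p.1 + inner ℝ p.2 x : ℝ) : EReal))
    (hrep₂ : ∀ x, ((f₂ x : ℝ) : EReal) = ⨆ p ∈ S₂, ((p.1 + inner ℝ p.2 x : ℝ) : EReal))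
    (dl du : H → Set (ℝ × H))
    (hdl : ∀ x, dl x = {q : ℝ × H | ∃ p ∈ S₁, q = (p.1 - f₁ x + inner ℝ p.2 x, p.2)})
    (hdu : ∀ x, du x = {q : ℝ × H | ∃ p ∈ S₂, q = (-p.1 + f₂ x - inner ℝ p.2 x, -p.2)}) :
    (∀ x Δx : H,
        (((f₁ (x + Δx) - f₂ (x + Δx) - (f₁ x - f₂ x) : ℝ)) : EReal)
          = (⨆ q ∈ dl x, ((q.1 + inner ℝ q.2 Δx : ℝ) : EReal))
            + ⨅ q ∈ du x, ((q.1 + inner ℝ q.2 Δx : ℝ) : EReal))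
      ∧ (∀ x, (⨆ q ∈ dl x, ((q.1 : ℝ) : EReal)) = 0)
      ∧ (∀ x, (⨅ q ∈ du x, ((q.1 : ℝ) : EReal)) = 0)
      ∧ (∀ x, IsClosed (dl x) ∧ Convex ℝ (dl x))
      ∧ (∀ x, IsClosed (du x) ∧ Convex ℝ (du x)) := by
  have hdl_image : ∀ x, dl x = recenter (f₁ x) x '' S₁ := fun x => by
    rw [hdl x]; ext q; simp [eq_comm]
  have hdu_image : ∀ x, du x = -(recenter (f₂ x) x '' S₂) := fun x => by
    rw [hdu x, ← Set.image_neg_eq_neg, ← Set.image_comp]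
    ext q
    simp only [Set.mem_ofPred_eq, Set.mem_image, Function.comp_apply, recenter_apply, Prod.neg_mk]
    refine exists_congr fun p => and_congr_right fun _ => ?_
    rw [eq_comm]
    ring_nf
  have hsup (x Δx : H) := hdl_image x ▸ biSup_image_recenter hrep₁ x Δx
  have hinf (x Δx : H) := hdu_image x ▸ biInf_neg_image_recenter hrep₂ x Δx
  refine ⟨fun x Δx => ?_, fun x => by simpa using hsup x 0, fun x => by simpa using hinf x 0,
    fun x => ?_, fun x => ?_⟩
  · rw [hsup, hinf, ← EReal.coe_add]
    congr 1
    ring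
  · rw [hdl_image x]
    exact ⟨isClosed_image_recenter hSclosed₁ _ _, hSconv₁.affine_image _⟩
  · rw [hdu_image x]
    exact ⟨(isClosed_image_recenter hSclosed₂ _ _).neg, (hSconv₂.affine_image _).neg⟩

/-- properties of the global codifferential of a DC function f = f₁ − f₂. -/
theorem global_codifferential_properties
    {H : Type*} [NormedAddCommGroup H] [InnerProductSpace ℝ H] [CompleteSpace H]
    (f₁ f₂ : H → ℝ) (S₁ S₂ : Set (ℝ × H))
    (hconv₁ : ConvexOn ℝ Set.univ f₁) (hconv₂ : ConvexOn ℝ Set.univ f₂)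
    (hlsc₁ : LowerSemicontinuous f₁) (hlsc₂ : LowerSemicontinuous f₂)
    (hSclosed₁ : IsClosed S₁) (hSconv₁ : Convex ℝ S₁)
    (hSclosed₂ : IsClosed S₂) (hSconv₂ : Convex ℝ S₂)
    (hrep₁ : ∀ x, ((f₁ x : ℝ) : EReal) = ⨆ p ∈ S₁, ((p.1 + inner ℝ p.2 x : ℝ) : EReal))
    (hrep₂ : ∀ x, ((f₂ x : ℝ) : EReal) = ⨆ p ∈ S₂, ((p.1 + inner ℝ p.2 x : ℝ) : EReal))
    (dl du : H → Set (ℝ × H))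
    (hdl : ∀ x, dl x = {q : ℝ × H | ∃ p ∈ S₁, q = (p.1 - f₁ x + inner ℝ p.2 x, p.2)})
    (hdu : ∀ x, du x = {q : ℝ × H | ∃ p ∈ S₂, q = (-p.1 + f₂ x - inner ℝ p.2 x, -p.2)}) :
    (∀ x Δx : H,
        (((f₁ (x + Δx) - f₂ (x + Δx) - (f₁ x - f₂ x) : ℝ)) : EReal)
          = (⨆ q ∈ dl x, ((q.1 + inner ℝ q.2 Δx : ℝ) : EReal))
            + ⨅ q ∈ du x, ((q.1 + inner ℝ q.2 Δx : ℝ) : EReal))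
      ∧ (∀ x, (⨆ q ∈ dl x, ((q.1 : ℝ) : EReal)) = 0)
      ∧ (∀ x, (⨅ q ∈ du x, ((q.1 : ℝ) : EReal)) = 0)
      ∧ (∀ x, IsClosed (dl x) ∧ Convex ℝ (dl x))
      ∧ (∀ x, IsClosed (du x) ∧ Convex ℝ (du x)) :=
  global_codifferential_properties_general f₁ f₂ S₁ S₂ hSclosed₁ hSconv₁ hSclosed₂ hSconv₂ hrep₁
    hrep₂ dl du hdl hdu
end

section
/- Let H be a real Hilbert space, f = f₁ − f₂ : H → ℝ a DC function (f₁, f₂ finite closed convex) that is bounded below, x* ∈ H, and [d̲f(x*), d̄f(x*)] its global codifferential at x*. Let C ⊆ d̄f(x*) be such that d̄f(x*) = cl conv C, and for each z ∈ C let (a(z), v(z)) be the point of minimal norm in the closed convex set d̲f(x*) + z (with norm ‖(a,v)‖² = a² + ‖v‖²). Then x* is a global minimizer of f if and only if a(z) ≥ 0 for every z ∈ C. -/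
/-!
For `q = (a, v)` write `pairing q w = a + ⟪v, w⟫`. The representations of `f₁, f₂` as suprema of
affine functions say that `f₁ (x* + w) - f₁ x*` is the supremum of `pairing · w` over `d̲f(x*)`
and `f₂ x* - f₂ (x* + w)` its infimum over `d̄f(x*)`. Hence for `z ∈ d̄f(x*)` the function
`G_z w = f₁ (x* + w) - f₁ x* + pairing z w`, the supremum of `pairing · w` over `d̲f(x*) + z`,
dominates `f (x* + w) - f x*`, and `f (x* + w) - f x*` is the infimum of `G_z w` over `z`.
As `z ↦ G_z w` is affine and continuous, that infimum may be taken over `C` instead of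
`cl conv C`, so `x*` is a global minimizer iff every `G_z`, `z ∈ C`, is nonnegative.

For the minimal-norm point `m = (a, v)` of `d̲f(x*) + z` the projection inequality reads
`‖m‖² ≤ ⟨m, q⟩` on that set. If `a < 0` it gives `G_z (v / a) ≤ ‖m‖² / a < 0`. If `a ≥ 0` and
`G_z x < 0`, it makes `G_z` decrease linearly along the ray `x + t (a x - v)`, which is
impossible since `G_z ≥ f (x* + ·) - f x*` is bounded below.
-/

open RealInnerProductSpace Set

theorem sq_norm_le_inner_of_isMinOn {F : Type*} [NormedAddCommGroup F] [InnerProductSpace ℝ F]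
    {K : Set F} (hK : Convex ℝ K) {v : F} (hv : v ∈ K) (hmin : IsMinOn (‖·‖) K v)
    {w : F} (hw : w ∈ K) : ‖v‖ ^ 2 ≤ ⟪v, w⟫ := by
  have : Nonempty K := ⟨⟨v, hv⟩⟩
  have hinf : ‖0 - v‖ = ⨅ u : K, ‖0 - (u : F)‖ :=
    le_antisymm (le_ciInf fun u => by simpa using hmin u.2)
      (ciInf_le ⟨0, forall_mem_range.2 fun _ => norm_nonneg _⟩ (⟨v, hv⟩ : K))
  have := (norm_eq_iInf_iff_real_inner_le_zero hK hv).1 hinf w hw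
  rw [zero_sub, inner_neg_left, inner_sub_right, real_inner_self_eq_norm_sq] at this
  linarith

section

variable {H : Type*} [NormedAddCommGroup H] [InnerProductSpace ℝ H]

theorem sq_add_sq_norm_le_mul_add_inner_of_forall_le {Q : Set (ℝ × H)} (hQ : Convex ℝ Q)
    {m : ℝ × H} (hm : m ∈ Q)
    (hmin : ∀ q ∈ Q, m.1 ^ 2 + ‖m.2‖ ^ 2 ≤ q.1 ^ 2 + ‖q.2‖ ^ 2) :
    ∀ q ∈ Q, m.1 ^ 2 + ‖m.2‖ ^ 2 ≤ m.1 * q.1 + ⟪m.2, q.2⟫ := by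
  intro q hq
  -- `ℝ × H` carries the sup norm; the Euclidean norm `a² + ‖v‖²` is that of `WithLp 2 (ℝ × H)`.
  have hnorm (q : ℝ × H) : ‖WithLp.toLp 2 q‖ ^ 2 = q.1 ^ 2 + ‖q.2‖ ^ 2 := by
    rw [WithLp.prod_norm_sq_eq_of_L2, Real.norm_eq_abs, sq_abs]; rfl
  have hK : Convex ℝ (WithLp.toLp 2 '' Q) :=
    hQ.linear_image (WithLp.linearEquiv 2 ℝ (ℝ × H)).symm.toLinearMap
  have := sq_norm_le_inner_of_isMinOn hK (mem_image_of_mem _ hm) ?_ (mem_image_of_mem _ hq)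
  · simpa [hnorm, mul_comm] using this
  · rintro _ ⟨q, hq, rfl⟩
    exact pow_le_pow_iff_left₀ (norm_nonneg _) (norm_nonneg _) two_ne_zero |>.1 <| by
      rw [hnorm, hnorm]; exact hmin q hq

def pairing (q : ℝ × H) (w : H) : ℝ := q.1 + ⟪q.2, w⟫

theorem pairing_add_left (p q : ℝ × H) (w : H) :
    pairing (p + q) w = pairing p w + pairing q w := by
  simp only [pairing, Prod.fst_add, Prod.snd_add, inner_add_left]; ring

theorem isLinearMap_pairing (w : H) : IsLinearMap ℝ (pairing · w) :=
  ⟨fun p q => pairing_add_left p q w, fun a q => by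
    simp only [pairing, Prod.smul_fst, Prod.smul_snd, smul_eq_mul, real_inner_smul_left]; ring⟩

theorem continuous_pairing (w : H) : Continuous (pairing · w) :=
  continuous_fst.add (continuous_snd.inner continuous_const)

theorem IsLUB.image_pairing_add_right {D : Set (ℝ × H)} {w : H} {r : ℝ}
    (h : IsLUB ((pairing · w) '' D) r) (z : ℝ × H) :
    IsLUB ((pairing · w) '' ((· + z) '' D)) (r + pairing z w) := by
  have : (pairing · w) '' ((· + z) '' D) = (· + pairing z w) '' ((pairing · w) '' D) := by
    simp only [image_image, pairing_add_left]
  rw [this]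
  exact (OrderIso.addRight (pairing z w)).isLUB_image'.2 h

theorem le_of_isGLB_pairing_closure_convexHull {C : Set (ℝ × H)} {w : H} {r c : ℝ}
    (hr : IsGLB ((pairing · w) '' closure (convexHull ℝ C)) r) (hC : ∀ z ∈ C, c ≤ pairing z w) :
    c ≤ r :=
  hr.2 <| forall_mem_image.2 <|
    closure_minimal (convexHull_min hC (convex_halfSpace_ge (isLinearMap_pairing w) c))
      (isClosed_le continuous_const (continuous_pairing w))

theorem isLUB_image_of_coe_eq_biSup {ι : Type*} {S : Set ι} {φ : ι → ℝ} {r : ℝ}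
    (h : (r : EReal) = ⨆ i ∈ S, (φ i : EReal)) : IsLUB (φ '' S) r := by
  have := isLUB_biSup (s := S) (f := fun i => (φ i : EReal))
  rw [← h, ← image_image] at this
  exact this.of_image EReal.coe_le_coe_iff

section Codifferential

variable {S : Set (ℝ × H)} {f : H → ℝ}

theorem convex_lowerCodiff (hS : Convex ℝ S) (x : H) :
    Convex ℝ {q : ℝ × H | ∃ p ∈ S, q = (p.1 - f x + ⟪p.2, x⟫, p.2)} := by
  rintro _ ⟨p, hp, rfl⟩ _ ⟨p', hp', rfl⟩ a b ha hb hab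
  refine ⟨a • p + b • p', hS hp hp' ha hb hab, ?_⟩
  ext
  · simp only [Prod.fst_add, Prod.smul_fst, Prod.snd_add, Prod.smul_snd, smul_eq_mul,
      inner_add_left, real_inner_smul_left]
    linear_combination (-f x) * hab
  · simp

variable (hf : ∀ y, IsLUB ((pairing · y) '' S) (f y))
include hf

theorem isLUB_pairing_lowerCodiff (x w : H) :
    IsLUB ((pairing · w) '' {q : ℝ × H | ∃ p ∈ S, q = (p.1 - f x + ⟪p.2, x⟫, p.2)})
      (f (x + w) - f x) := by
  have : (pairing · w) '' {q : ℝ × H | ∃ p ∈ S, q = (p.1 - f x + ⟪p.2, x⟫, p.2)}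
      = (· - f x) '' ((pairing · (x + w)) '' S) := by
    ext t
    simp only [mem_image, mem_ofPred_eq, pairing, inner_add_right]
    constructor
    · rintro ⟨_, ⟨p, hp, rfl⟩, rfl⟩
      exact ⟨_, ⟨p, hp, rfl⟩, by ring⟩
    · rintro ⟨_, ⟨p, hp, rfl⟩, rfl⟩
      exact ⟨_, ⟨p, hp, rfl⟩, by ring⟩
  rw [this]
  exact (OrderIso.subRight (f x)).isLUB_image'.2 (hf (x + w))

theorem isGLB_pairing_upperCodiff (x w : H) :
    IsGLB ((pairing · w) '' {q : ℝ × H | ∃ p ∈ S, q = (-p.1 + f x - ⟪p.2, x⟫, -p.2)})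
      (f x - f (x + w)) := by
  have hpair (p : ℝ × H) :
      pairing (-p.1 + f x - ⟪p.2, x⟫, -p.2) w = f x - pairing p (x + w) := by
    simp only [pairing, inner_neg_left, inner_add_right]
    ring
  refine ⟨?_, fun B hB => ?_⟩
  · rintro _ ⟨_, ⟨p, hp, rfl⟩, rfl⟩
    simp only [hpair]
    linarith [(hf (x + w)).1 (mem_image_of_mem _ hp)]
  · have : f (x + w) ≤ f x - B := (hf (x + w)).2 <| forall_mem_image.2 fun p hp => by
      have := hB ⟨_, ⟨p, hp, rfl⟩, rfl⟩
      simp only [hpair] at this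
      linarith
    linarith

end Codifferential

section MinNormPoint

variable {Q : Set (ℝ × H)} {m : ℝ × H} {G : H → ℝ}
  (hvar : ∀ q ∈ Q, m.1 ^ 2 + ‖m.2‖ ^ 2 ≤ m.1 * q.1 + ⟪m.2, q.2⟫)
  (hG : ∀ w, IsLUB ((pairing · w) '' Q) (G w))
include hvar hG

theorem fst_nonneg_of_forall_nonneg (h : ∀ w, 0 ≤ G w) : 0 ≤ m.1 := by
  by_contra! hneg
  have hbound : ∀ q ∈ Q, pairing q (m.1⁻¹ • m.2) ≤ (m.1 ^ 2 + ‖m.2‖ ^ 2) / m.1 := by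
    intro q hq
    rw [le_div_iff_of_neg hneg]
    have : pairing q (m.1⁻¹ • m.2) * m.1 = m.1 * q.1 + ⟪m.2, q.2⟫ := by
      simp only [pairing, real_inner_smul_right, real_inner_comm m.2]
      field_simp [hneg.ne]
    linarith [hvar q hq]
  have hG_le := (hG (m.1⁻¹ • m.2)).2 (forall_mem_image.2 hbound)
  have : (m.1 ^ 2 + ‖m.2‖ ^ 2) / m.1 < 0 :=
    div_neg_of_pos_of_neg (by nlinarith [sq_nonneg ‖m.2‖]) hneg
  linarith [h (m.1⁻¹ • m.2)]

theorem nonneg_of_fst_nonneg (hm : m ∈ Q) (hbdd : BddBelow (range G)) (h : 0 ≤ m.1) (x : H) :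
    0 ≤ G x := by
  by_contra! hx
  obtain ⟨b, hb⟩ := hbdd
  have hbx : b ≤ G x := hb (mem_range_self x)
  set δ := m.1 * G x - (m.1 ^ 2 + ‖m.2‖ ^ 2) with hδ_def
  have hδ : δ < 0 := by
    rcases h.lt_or_eq with hpos | hzero
    · nlinarith [norm_nonneg m.2]
    · have hm₂ : m.2 ≠ 0 := by
        rintro hm₂
        have := (hG x).1 (mem_image_of_mem _ hm)
        simp only [pairing, ← hzero, hm₂, inner_zero_left, add_zero] at this
        linarith
      have := norm_pos_iff.2 hm₂
      rw [hδ_def, ← hzero]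
      nlinarith
  -- Along this ray every affine piece of `G` decreases with slope at most `δ < 0`.
  have hray (t : ℝ) (ht : 0 ≤ t) : G (x + t • (m.1 • x - m.2)) ≤ G x + t * δ := by
    refine (hG _).2 (forall_mem_image.2 fun q hq => ?_)
    have hqx : q.1 + ⟪q.2, x⟫ ≤ G x := (hG x).1 (mem_image_of_mem _ hq)
    have hslope : m.1 * ⟪q.2, x⟫ - ⟪m.2, q.2⟫ ≤ δ := by nlinarith [hvar q hq]
    have : pairing q (x + t • (m.1 • x - m.2))
        = q.1 + ⟪q.2, x⟫ + t * (m.1 * ⟪q.2, x⟫ - ⟪m.2, q.2⟫) := by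
      simp only [pairing, inner_add_right, inner_sub_right, real_inner_smul_right,
        real_inner_comm m.2]
      ring
    rw [this]
    nlinarith
  set t := (G x - b) / -δ + 1 with ht_def
  have ht : 0 ≤ t := add_nonneg (div_nonneg (sub_nonneg.2 hbx) (neg_nonneg.2 hδ.le)) zero_le_one
  have htδ : t * δ = b - G x + δ := by
    rw [ht_def]
    field_simp [hδ.ne]
    ring
  linarith [hray t ht, hb (mem_range_self (x + t • (m.1 • x - m.2)))]

end MinNormPoint
end

theorem global_optimality_via_codifferential_general
    {H : Type*} [NormedAddCommGroup H] [InnerProductSpace ℝ H]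
    (f₁ f₂ : H → ℝ) (S₁ S₂ : Set (ℝ × H))
    (hSconv₁ : Convex ℝ S₁)
    (hrep₁ : ∀ x, ((f₁ x : ℝ) : EReal) = ⨆ p ∈ S₁, ((p.1 + inner ℝ p.2 x : ℝ) : EReal))
    (hrep₂ : ∀ x, ((f₂ x : ℝ) : EReal) = ⨆ p ∈ S₂, ((p.1 + inner ℝ p.2 x : ℝ) : EReal))
    (hbdd : ∃ c : ℝ, ∀ x, c ≤ f₁ x - f₂ x)
    (xs : H) (dl du : Set (ℝ × H))
    (hdl : dl = {q : ℝ × H | ∃ p ∈ S₁, q = (p.1 - f₁ xs + inner ℝ p.2 xs, p.2)})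
    (hdu : du = {q : ℝ × H | ∃ p ∈ S₂, q = (-p.1 + f₂ xs - inner ℝ p.2 xs, -p.2)})
    (C : Set (ℝ × H)) (hC : C ⊆ du) (hCgen : du = closure (convexHull ℝ C))
    (m : ℝ × H → ℝ × H)
    (hmmem : ∀ z ∈ C, ∃ p ∈ dl, m z = p + z)
    (hmmin : ∀ z ∈ C, ∀ p ∈ dl,
      (m z).1 ^ 2 + ‖(m z).2‖ ^ 2 ≤ (p + z).1 ^ 2 + ‖(p + z).2‖ ^ 2) :
    (∀ x, f₁ xs - f₂ xs ≤ f₁ x - f₂ x) ↔ ∀ z ∈ C, 0 ≤ (m z).1 := by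
  subst hdl hdu
  have hf₁ (y : H) : IsLUB ((pairing · y) '' S₁) (f₁ y) := isLUB_image_of_coe_eq_biSup (hrep₁ y)
  have hf₂ (y : H) : IsLUB ((pairing · y) '' S₂) (f₂ y) := isLUB_image_of_coe_eq_biSup (hrep₂ y)
  have hupper (w : H) := isGLB_pairing_upperCodiff hf₂ xs w
  have hlower (z : ℝ × H) (w : H) := (isLUB_pairing_lowerCodiff hf₁ xs w).image_pairing_add_right z
  have hmQ (z : ℝ × H) (hz : z ∈ C) : m z ∈ (· + z) '' _ :=
    let ⟨p, hp, h⟩ := hmmem z hz; ⟨p, hp, h.symm⟩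
  have hvar (z : ℝ × H) (hz : z ∈ C) :=
    sq_add_sq_norm_le_mul_add_inner_of_forall_le (by simpa only [add_comm] using
      (convex_lowerCodiff (f := f₁) hSconv₁ xs).translate z) (hmQ z hz)
      (forall_mem_image.2 (hmmin z hz))
  constructor
  · intro hmin z hz
    refine fst_nonneg_of_forall_nonneg (hvar z hz) (hlower z) fun w => ?_
    linarith [hmin (xs + w), (hupper w).1 (mem_image_of_mem _ (hC hz))]
  · intro hm x
    obtain ⟨c, hc⟩ := hbdd
    have hG_nonneg (z : ℝ × H) (hz : z ∈ C) (w : H) :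
        0 ≤ f₁ (xs + w) - f₁ xs + pairing z w := by
      refine nonneg_of_fst_nonneg (hvar z hz) (hlower z) (hmQ z hz)
        ⟨c - (f₁ xs - f₂ xs), forall_mem_range.2 fun w => ?_⟩ (hm z hz) w
      linarith [hc (xs + w), (hupper w).1 (mem_image_of_mem _ (hC hz))]
    have := le_of_isGLB_pairing_closure_convexHull (hCgen ▸ hupper (x - xs)) fun z hz =>
      neg_le_iff_add_nonneg'.2 (hG_nonneg z hz (x - xs))
    rw [add_sub_cancel] at this
    linarith

/-- global optimality condition for a bounded-below DC function in terms
of the minimal-norm elements of d̲f(x*) + z, z ∈ C. -/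
theorem global_optimality_via_codifferential
    {H : Type*} [NormedAddCommGroup H] [InnerProductSpace ℝ H] [CompleteSpace H]
    (f₁ f₂ : H → ℝ) (S₁ S₂ : Set (ℝ × H))
    (hconv₁ : ConvexOn ℝ Set.univ f₁) (hconv₂ : ConvexOn ℝ Set.univ f₂)
    (hlsc₁ : LowerSemicontinuous f₁) (hlsc₂ : LowerSemicontinuous f₂)
    (hSclosed₁ : IsClosed S₁) (hSconv₁ : Convex ℝ S₁)
    (hSclosed₂ : IsClosed S₂) (hSconv₂ : Convex ℝ S₂)
    (hrep₁ : ∀ x, ((f₁ x : ℝ) : EReal) = ⨆ p ∈ S₁, ((p.1 + inner ℝ p.2 x : ℝ) : EReal))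
    (hrep₂ : ∀ x, ((f₂ x : ℝ) : EReal) = ⨆ p ∈ S₂, ((p.1 + inner ℝ p.2 x : ℝ) : EReal))
    (hbdd : ∃ c : ℝ, ∀ x, c ≤ f₁ x - f₂ x)
    (xs : H) (dl du : Set (ℝ × H))
    (hdl : dl = {q : ℝ × H | ∃ p ∈ S₁, q = (p.1 - f₁ xs + inner ℝ p.2 xs, p.2)})
    (hdu : du = {q : ℝ × H | ∃ p ∈ S₂, q = (-p.1 + f₂ xs - inner ℝ p.2 xs, -p.2)})
    (C : Set (ℝ × H)) (hC : C ⊆ du) (hCgen : du = closure (convexHull ℝ C))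
    (m : ℝ × H → ℝ × H)
    (hmmem : ∀ z ∈ C, ∃ p ∈ dl, m z = p + z)
    (hmmin : ∀ z ∈ C, ∀ p ∈ dl,
      (m z).1 ^ 2 + ‖(m z).2‖ ^ 2 ≤ (p + z).1 ^ 2 + ‖(p + z).2‖ ^ 2) :
    (∀ x, f₁ xs - f₂ xs ≤ f₁ x - f₂ x) ↔ ∀ z ∈ C, 0 ≤ (m z).1 :=
  global_optimality_via_codifferential_general f₁ f₂ S₁ S₂ hSconv₁ hrep₁ hrep₂ hbdd xs dl du hdl hdu
    C hC hCgen m hmmem hmmin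
end
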